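/- arXiv:2406.04171 — 6 statements merged into one kernel-verified Lean document; each statement's English description precedes it below -/
import Mathlib

section
/- Let n, m ≥ 1, let G be a subgroup of GL_n(ℝ) and H a subgroup of G, let K be a subgroup of GL_m(ℝ), let λ : K → G be a group homomorphism, and let L : M_m(ℝ) → M_n(ℝ) be an injective linear map satisfying L(k X k⁻¹) = λ(k) L(X) λ(k)⁻¹ for all k ∈ K and X ∈ M_m(ℝ). Let C : ℝⁿ → (M_m(ℝ))ⁿ be any map and define B : ℝⁿ → (M_n(ℝ))ⁿ by B_μ(x) := L(C_μ(x)). Then: (i) if B_μ(Λx) = Σ_{ν=1}^n (Λ⁻¹)_{ν,μ} · Λ B_ν(x) Λ⁻¹ for all Λ ∈ H, x ∈ ℝⁿ and μ, then C_μ(λ(k)x) = Σ_{ν=1}^n (λ(k)⁻¹)_{ν,μ} · k C_ν(x) k⁻¹ for all k ∈ λ⁻¹(H), x ∈ ℝⁿ and μ; (ii) if moreover H ⊆ λ(K), then the converse implication also holds. -/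
open Matrix BigOperators

noncomputable section

/-- The underlying matrix of an element of the general linear group. -/
def glMat {n : ℕ} (Λ : GL (Fin n) ℝ) : Matrix (Fin n) (Fin n) ℝ := Λ

/-- `B : ℝⁿ → (Mₙ(ℝ))ⁿ` is algebraically `H`-equivariant. -/
def BEquivOn (n : ℕ) (H : Subgroup (GL (Fin n) ℝ))
    (B : (Fin n → ℝ) → Fin n → Matrix (Fin n) (Fin n) ℝ) : Prop :=
  ∀ Λ ∈ H, ∀ (x : Fin n → ℝ) (μ : Fin n),
    B (glMat Λ *ᵥ x) μ =
      ∑ ν, glMat Λ⁻¹ ν μ • (glMat Λ * B x ν * glMat Λ⁻¹)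

/-- `C : ℝⁿ → (Mₘ(ℝ))ⁿ` is algebraically `λ⁻¹(H)`-equivariant, where `k ∈ K` acts on `ℝⁿ`
through `λ(k)` and by conjugation by `k` on `Mₘ(ℝ)`. -/
def CEquivOn (n m : ℕ) (H : Subgroup (GL (Fin n) ℝ)) (K : Subgroup (GL (Fin m) ℝ))
    (lam : K →* GL (Fin n) ℝ)
    (C : (Fin n → ℝ) → Fin n → Matrix (Fin m) (Fin m) ℝ) : Prop :=
  ∀ k : K, lam k ∈ H → ∀ (x : Fin n → ℝ) (μ : Fin n),
    C (glMat (lam k) *ᵥ x) μ =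
      ∑ ν, glMat (lam k)⁻¹ ν μ •
        (glMat (k : GL (Fin m) ℝ) * C x ν * glMat ((k : GL (Fin m) ℝ))⁻¹)

theorem stmt0 (n m : ℕ) (hn : 1 ≤ n) (hm : 1 ≤ m)
    (G H : Subgroup (GL (Fin n) ℝ)) (hHG : H ≤ G)
    (K : Subgroup (GL (Fin m) ℝ))
    (lam : K →* GL (Fin n) ℝ) (hlamG : ∀ k : K, lam k ∈ G)
    (L : Matrix (Fin m) (Fin m) ℝ →ₗ[ℝ] Matrix (Fin n) (Fin n) ℝ)
    (hLinj : Function.Injective L)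
    (hLconj : ∀ (k : K) (X : Matrix (Fin m) (Fin m) ℝ),
      L (glMat (k : GL (Fin m) ℝ) * X * glMat ((k : GL (Fin m) ℝ))⁻¹)
        = glMat (lam k) * L X * glMat (lam k)⁻¹)
    (C : (Fin n → ℝ) → Fin n → Matrix (Fin m) (Fin m) ℝ)
    (B : (Fin n → ℝ) → Fin n → Matrix (Fin n) (Fin n) ℝ)
    (hB : ∀ x μ, B x μ = L (C x μ)) :
    (BEquivOn n H B → CEquivOn n m H K lam C) ∧
      ((∀ Λ ∈ H, ∃ k : K, lam k = Λ) → CEquivOn n m H K lam C → BEquivOn n H B) := by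
  constructor
  · intro hBE k hk x μ
    apply hLinj
    have h := hBE (lam k) hk x μ
    rw [hB] at h
    rw [h, map_sum]
    refine Finset.sum_congr rfl fun ν _ => ?_
    rw [hB, _root_.map_smul, hLconj]
  · intro hsurj hCE Λ hΛ x μ
    obtain ⟨k, hkΛ⟩ := hsurj Λ hΛ
    subst hkΛ
    have h := hCE k hΛ x μ
    rw [hB, h, map_sum]
    refine Finset.sum_congr rfl fun ν _ => ?_
    rw [_root_.map_smul, hLconj, hB]
end
end

section
/- Let n ≥ 3, let 1 ≤ i < j ≤ n, and let θ ∈ ℝ with sin θ ≠ 0. Then the fixed space {C ∈ (so(n))ⁿ : ρ(g^θ_{i,j})C = C} is exactly the linear span of the following tuples: (e_k ⊗ e^A_{l,m}) for all k and all l < m with {k,l,m} ∩ {i,j} = ∅; (e_i ⊗ e^A_{i,k} + e_j ⊗ e^A_{j,k}) for all k ∉ {i,j}; (e_i ⊗ e^A_{j,k} − e_j ⊗ e^A_{i,k}) for all k ∉ {i,j}; and (e_k ⊗ e^A_{i,j}) for all k ∉ {i,j}. -/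
open Matrix BigOperators

noncomputable section

/-- `e^A_{i,j} = e_i e_jᵀ − e_j e_iᵀ`. -/
def eA {n : ℕ} (i j : Fin n) : Matrix (Fin n) (Fin n) ℝ :=
  Matrix.single i j 1 - Matrix.single j i 1

/-- The action `(ρ(g)C)_μ := Σ_ν (g⁻¹)_{ν,μ} • g C_ν g⁻¹` on `n`-tuples of matrices. -/
def rho {n : ℕ} (g : Matrix (Fin n) (Fin n) ℝ)
    (C : Fin n → Matrix (Fin n) (Fin n) ℝ) : Fin n → Matrix (Fin n) (Fin n) ℝ :=
  fun μ => ∑ ν, (g⁻¹ ν μ) • (g * C ν * g⁻¹)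

/-- The plane rotation `g^θ_{i,j}`. -/
def rot {n : ℕ} (i j : Fin n) (θ : ℝ) : Matrix (Fin n) (Fin n) ℝ :=
  Matrix.of fun a b =>
    if a = i ∧ b = i then Real.cos θ
    else if a = j ∧ b = j then Real.cos θ
    else if a = i ∧ b = j then -Real.sin θ
    else if a = j ∧ b = i then Real.sin θ
    else if a = b then 1 else 0

/-! The rotation `R = g^θ_{i,j}` is orthogonal, so `ρ(R)` acts on the entries `C μ a b` by the
plane rotation in each of the three indices `μ, a, b`: it rotates the coordinates `i, j` and fixes
the others. In particular `ρ(R) (e_k ⊗ M) = R e_k ⊗ R M Rᵀ`, and the listed tuples are invariant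
because `R e_i = cos θ e_i + sin θ e_j` and `R e_j = -sin θ e_i + cos θ e_j`.

Conversely, sort the entries of an invariant skew tuple by which indices lie in `{i, j}`. The pairs
`(C i a b, C j a b)` and `(C μ i b, C μ j b)` with the other indices off the plane, and the pair
`(C i i j, C j i j)`, are fixed by the rotation by `θ`; the pair
`(C i i k - C j j k, C i j k + C j i k)` is fixed by the rotation by `2θ`. Since `sin θ ≠ 0`,
neither rotation is the identity, so all these vanish. After subtracting the listed tuples with
coefficients `C i i k`, `C i j k`, `C k i j`, what remains is supported off the plane and is a
combination of the tuples `e_k ⊗ e^A_{l,m}` with `k, l, m ∉ {i, j}`. -/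

section

variable {n : ℕ}

lemma eq_or_eq_or_ne_and_ne {α : Type*} (a i j : α) : a = i ∨ a = j ∨ (a ≠ i ∧ a ≠ j) := by
  tauto

lemma eq_zero_of_rotate_eq_self {φ x y : ℝ} (hφ : Real.cos φ ≠ 1)
    (h₁ : Real.cos φ * x - Real.sin φ * y = x) (h₂ : Real.sin φ * x + Real.cos φ * y = y) :
    x = 0 ∧ y = 0 := by
  have hc : 2 - 2 * Real.cos φ ≠ 0 := fun h => hφ (by linarith)
  have hx : (2 - 2 * Real.cos φ) * x = 0 := by
    linear_combination (Real.cos φ - 1) * h₁ + Real.sin φ * h₂ - x * Real.sin_sq_add_cos_sq φ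
  have hy : (2 - 2 * Real.cos φ) * y = 0 := by
    linear_combination -Real.sin φ * h₁ + (Real.cos φ - 1) * h₂ - y * Real.sin_sq_add_cos_sq φ
  exact ⟨(mul_eq_zero.mp hx).resolve_left hc, (mul_eq_zero.mp hy).resolve_left hc⟩

lemma eA_apply (l m a b : Fin n) :
    eA l m a b = (if l = a ∧ m = b then 1 else 0) - (if m = a ∧ l = b then 1 else 0) := by
  simp [eA, Matrix.single_apply]

lemma transpose_eA (l m : Fin n) : (eA l m)ᵀ = -eA l m := by
  simp [eA, Matrix.transpose_single]

lemma eA_swap (l m : Fin n) : eA m l = -eA l m := by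
  simp [eA]

lemma eA_eq_vecMulVec (l m : Fin n) :
    eA l m = vecMulVec (Pi.single l 1) (Pi.single m 1) -
      vecMulVec (Pi.single m 1) (Pi.single l 1) := by
  rw [eA, single_eq_single_vecMulVec_single, single_eq_single_vecMulVec_single]

lemma mul_vecMulVec_mul_transpose (g : Matrix (Fin n) (Fin n) ℝ) (u v : Fin n → ℝ) :
    g * vecMulVec u v * gᵀ = vecMulVec (g *ᵥ u) (g *ᵥ v) := by
  rw [mul_vecMulVec, vecMulVec_mul, vecMul_transpose]

lemma mul_eA_mul_transpose (g : Matrix (Fin n) (Fin n) ℝ) (l m : Fin n) :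
    g * eA l m * gᵀ = vecMulVec (g *ᵥ Pi.single l 1) (g *ᵥ Pi.single m 1) -
      vecMulVec (g *ᵥ Pi.single m 1) (g *ᵥ Pi.single l 1) := by
  rw [eA_eq_vecMulVec, mul_sub, sub_mul, mul_vecMulVec_mul_transpose, mul_vecMulVec_mul_transpose]

lemma rho_add (g : Matrix (Fin n) (Fin n) ℝ) (C D : Fin n → Matrix (Fin n) (Fin n) ℝ) :
    rho g (C + D) = rho g C + rho g D := by
  funext μ
  simp [rho, mul_add, add_mul, smul_add, Finset.sum_add_distrib]

lemma rho_smul (g : Matrix (Fin n) (Fin n) ℝ) (r : ℝ) (C : Fin n → Matrix (Fin n) (Fin n) ℝ) :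
    rho g (r • C) = r • rho g C := by
  funext μ
  simp only [rho, Pi.smul_apply, Finset.smul_sum, mul_smul_comm, smul_mul_assoc, smul_comm r]

def rhoLinear (g : Matrix (Fin n) (Fin n) ℝ) :
    (Fin n → Matrix (Fin n) (Fin n) ℝ) →ₗ[ℝ] (Fin n → Matrix (Fin n) (Fin n) ℝ) where
  toFun := rho g
  map_add' := rho_add g
  map_smul' := rho_smul g

lemma rho_sub (g : Matrix (Fin n) (Fin n) ℝ) (C D : Fin n → Matrix (Fin n) (Fin n) ℝ) :
    rho g (C - D) = rho g C - rho g D :=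
  map_sub (rhoLinear g) C D

lemma rho_single (g : Matrix (Fin n) (Fin n) ℝ) (k : Fin n) (M : Matrix (Fin n) (Fin n) ℝ) :
    rho g (Pi.single k M) = fun μ => g⁻¹ k μ • (g * M * g⁻¹) := by
  funext μ
  rw [rho, Finset.sum_eq_single k (fun ν _ hν => by simp [hν]) (by simp), Pi.single_eq_same]

lemma rho_apply_of_inv_eq_transpose {g : Matrix (Fin n) (Fin n) ℝ} (hg : g⁻¹ = gᵀ)
    (C : Fin n → Matrix (Fin n) (Fin n) ℝ) (μ a b : Fin n) :
    rho g C μ a b = (g *ᵥ fun ν => (g *ᵥ fun y => (g *ᵥ fun x => C ν x y) a) b) μ := by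
  simp only [rho, hg, Matrix.sum_apply, Matrix.smul_apply, mul_apply, transpose_apply, mulVec,
    dotProduct, smul_eq_mul, Finset.mul_sum, Finset.sum_mul]
  exact Finset.sum_congr rfl fun ν _ => Finset.sum_congr rfl fun y _ =>
    Finset.sum_congr rfl fun x _ => by ring

def skewTuples : Submodule ℝ (Fin n → Matrix (Fin n) (Fin n) ℝ) where
  carrier := {C | ∀ μ, (C μ)ᵀ = -C μ}
  add_mem' {C D} hC hD μ := by simp [hC μ, hD μ, add_comm]
  zero_mem' μ := by simp
  smul_mem' r C hC μ := by simp [hC μ]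

def invariantSkewTuples (g : Matrix (Fin n) (Fin n) ℝ) :
    Submodule ℝ (Fin n → Matrix (Fin n) (Fin n) ℝ) :=
  skewTuples ⊓ LinearMap.eqLocus (rhoLinear g) LinearMap.id

lemma mem_invariantSkewTuples {g : Matrix (Fin n) (Fin n) ℝ}
    {C : Fin n → Matrix (Fin n) (Fin n) ℝ} :
    C ∈ invariantSkewTuples g ↔ C ∈ skewTuples ∧ rho g C = C :=
  Iff.rfl

lemma apply_swap_of_mem_skewTuples {C : Fin n → Matrix (Fin n) (Fin n) ℝ} (hC : C ∈ skewTuples)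
    (μ a b : Fin n) : C μ b a = -C μ a b := by
  simpa using congrFun (congrFun (hC μ) a) b

lemma single_mem_skewTuples (k : Fin n) {M : Matrix (Fin n) (Fin n) ℝ} (hM : Mᵀ = -M) :
    Pi.single k M ∈ skewTuples := by
  intro μ
  rcases eq_or_ne μ k with rfl | hμ
  · simpa using hM
  · simp [hμ]

lemma eq_sum_single_eA {C : Fin n → Matrix (Fin n) (Fin n) ℝ} (hC : C ∈ skewTuples) :
    C = (2⁻¹ : ℝ) • ∑ k, ∑ l, ∑ m, C k l m • Pi.single k (eA l m) := by
  funext μ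
  ext a b
  simp only [Pi.smul_apply, Finset.sum_apply, Pi.single_apply, smul_ite, smul_zero,
    Finset.sum_ite_irrel, Finset.sum_const_zero, Finset.sum_ite_eq, Finset.mem_univ, ↓reduceIte,
    Matrix.smul_apply, Matrix.sum_apply, eA_apply, ite_and, smul_eq_mul, mul_sub, mul_ite, mul_one,
    mul_zero, Finset.sum_sub_distrib, Finset.sum_ite_eq']
  rw [apply_swap_of_mem_skewTuples hC]
  ring

section Rotation

variable {i j : Fin n} {θ : ℝ}

lemma rot_row_left (hij : i ≠ j) :
    rot i j θ i = Real.cos θ • Pi.single i 1 - Real.sin θ • Pi.single j 1 := by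
  ext b
  simp only [rot, of_apply, Pi.sub_apply, Pi.smul_apply, Pi.single_apply, smul_eq_mul]
  grind

lemma rot_row_right (hij : i ≠ j) :
    rot i j θ j = Real.sin θ • Pi.single i 1 + Real.cos θ • Pi.single j 1 := by
  ext b
  simp only [rot, of_apply, Pi.add_apply, Pi.smul_apply, Pi.single_apply, smul_eq_mul]
  grind

lemma rot_row_of_ne {a : Fin n} (hai : a ≠ i) (haj : a ≠ j) : rot i j θ a = Pi.single a 1 := by
  ext b
  simp only [rot, of_apply, Pi.single_apply]
  grind

lemma rot_mulVec_apply_left (hij : i ≠ j) (f : Fin n → ℝ) :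
    (rot i j θ *ᵥ f) i = Real.cos θ * f i - Real.sin θ * f j := by
  change rot i j θ i ⬝ᵥ f = _
  simp [rot_row_left hij, sub_dotProduct]

lemma rot_mulVec_apply_right (hij : i ≠ j) (f : Fin n → ℝ) :
    (rot i j θ *ᵥ f) j = Real.sin θ * f i + Real.cos θ * f j := by
  change rot i j θ j ⬝ᵥ f = _
  simp [rot_row_right hij, add_dotProduct]

lemma rot_mulVec_apply_of_ne {a : Fin n} (hai : a ≠ i) (haj : a ≠ j) (f : Fin n → ℝ) :
    (rot i j θ *ᵥ f) a = f a := by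
  change rot i j θ a ⬝ᵥ f = _
  simp [rot_row_of_ne hai haj]

lemma rot_mulVec_single_left (hij : i ≠ j) :
    rot i j θ *ᵥ Pi.single i 1 = Real.cos θ • Pi.single i 1 + Real.sin θ • Pi.single j 1 := by
  ext a
  rcases eq_or_eq_or_ne_and_ne a i j with rfl | rfl | ⟨hai, haj⟩ <;>
    simp [rot_mulVec_apply_left, rot_mulVec_apply_right, rot_mulVec_apply_of_ne, *]

lemma rot_mulVec_single_right (hij : i ≠ j) :
    rot i j θ *ᵥ Pi.single j 1 = -Real.sin θ • Pi.single i 1 + Real.cos θ • Pi.single j 1 := by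
  ext a
  rcases eq_or_eq_or_ne_and_ne a i j with rfl | rfl | ⟨hai, haj⟩ <;>
    simp [rot_mulVec_apply_left, rot_mulVec_apply_right, rot_mulVec_apply_of_ne, *]

lemma rot_mulVec_single_of_ne {k : Fin n} (hki : k ≠ i) (hkj : k ≠ j) :
    rot i j θ *ᵥ Pi.single k 1 = Pi.single k 1 := by
  ext a
  change rot i j θ a ⬝ᵥ Pi.single k 1 = _
  simp only [dotProduct_single_one, rot, of_apply, Pi.single_apply]
  grind

lemma rot_mulVec_row (hij : i ≠ j) (b : Fin n) : rot i j θ *ᵥ rot i j θ b = Pi.single b 1 := by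
  have hcs := Real.cos_sq_add_sin_sq θ
  rcases eq_or_eq_or_ne_and_ne b i j with rfl | rfl | ⟨hbi, hbj⟩
  · rw [rot_row_left hij, mulVec_sub, mulVec_smul, mulVec_smul, rot_mulVec_single_left hij,
      rot_mulVec_single_right hij]
    linear_combination (norm := module) hcs • (Pi.single b 1 : Fin n → ℝ)
  · rw [rot_row_right hij, mulVec_add, mulVec_smul, mulVec_smul, rot_mulVec_single_left hij,
      rot_mulVec_single_right hij]
    linear_combination (norm := module) hcs • (Pi.single b 1 : Fin n → ℝ)
  · rw [rot_row_of_ne hbi hbj, rot_mulVec_single_of_ne hbi hbj]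

lemma rot_mul_transpose (hij : i ≠ j) : rot i j θ * (rot i j θ)ᵀ = 1 := by
  ext a b
  change (rot i j θ *ᵥ rot i j θ b) a = _
  rw [rot_mulVec_row hij, one_apply, Pi.single_apply]

lemma inv_rot (hij : i ≠ j) : (rot i j θ)⁻¹ = (rot i j θ)ᵀ :=
  inv_eq_right_inv (rot_mul_transpose hij)

lemma rot_conj_eA_self (hij : i ≠ j) : rot i j θ * eA i j * (rot i j θ)ᵀ = eA i j := by
  rw [mul_eA_mul_transpose, rot_mulVec_single_left hij, rot_mulVec_single_right hij,
    eA_eq_vecMulVec]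
  simp only [add_vecMulVec, vecMulVec_add, smul_vecMulVec, vecMulVec_smul]
  linear_combination (norm := module) Real.cos_sq_add_sin_sq θ •
    (vecMulVec (Pi.single i 1) (Pi.single j 1) - vecMulVec (Pi.single j 1) (Pi.single i 1) :
      Matrix (Fin n) (Fin n) ℝ)

lemma rot_conj_eA_left (hij : i ≠ j) {k : Fin n} (hki : k ≠ i) (hkj : k ≠ j) :
    rot i j θ * eA i k * (rot i j θ)ᵀ = Real.cos θ • eA i k + Real.sin θ • eA j k := by
  rw [mul_eA_mul_transpose, rot_mulVec_single_left hij, rot_mulVec_single_of_ne hki hkj,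
    eA_eq_vecMulVec, eA_eq_vecMulVec]
  simp only [add_vecMulVec, vecMulVec_add, smul_vecMulVec, vecMulVec_smul]
  module

lemma rot_conj_eA_right (hij : i ≠ j) {k : Fin n} (hki : k ≠ i) (hkj : k ≠ j) :
    rot i j θ * eA j k * (rot i j θ)ᵀ = -Real.sin θ • eA i k + Real.cos θ • eA j k := by
  rw [mul_eA_mul_transpose, rot_mulVec_single_right hij, rot_mulVec_single_of_ne hki hkj,
    eA_eq_vecMulVec, eA_eq_vecMulVec]
  simp only [add_vecMulVec, vecMulVec_add, smul_vecMulVec, vecMulVec_smul]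
  module

lemma rot_conj_eA_of_ne {l m : Fin n} (hli : l ≠ i) (hlj : l ≠ j) (hmi : m ≠ i) (hmj : m ≠ j) :
    rot i j θ * eA l m * (rot i j θ)ᵀ = eA l m := by
  rw [mul_eA_mul_transpose, rot_mulVec_single_of_ne hli hlj, rot_mulVec_single_of_ne hmi hmj,
    eA_eq_vecMulVec]

lemma rho_rot_single (hij : i ≠ j) (k : Fin n) (M : Matrix (Fin n) (Fin n) ℝ) :
    rho (rot i j θ) (Pi.single k M) =
      fun μ => (rot i j θ *ᵥ Pi.single k 1) μ • (rot i j θ * M * (rot i j θ)ᵀ) := by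
  rw [rho_single, inv_rot hij]
  funext μ
  rw [mulVec_single_one]
  rfl

lemma rho_rot_single_left (hij : i ≠ j) (M : Matrix (Fin n) (Fin n) ℝ) :
    rho (rot i j θ) (Pi.single i M) =
      Pi.single i (Real.cos θ • (rot i j θ * M * (rot i j θ)ᵀ)) +
        Pi.single j (Real.sin θ • (rot i j θ * M * (rot i j θ)ᵀ)) := by
  rw [rho_rot_single hij, rot_mulVec_single_left hij]
  funext μ
  simp [add_smul, mul_smul, Pi.single_apply_smul, Pi.single_smul']

lemma rho_rot_single_right (hij : i ≠ j) (M : Matrix (Fin n) (Fin n) ℝ) :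
    rho (rot i j θ) (Pi.single j M) =
      Pi.single i (-Real.sin θ • (rot i j θ * M * (rot i j θ)ᵀ)) +
        Pi.single j (Real.cos θ • (rot i j θ * M * (rot i j θ)ᵀ)) := by
  rw [rho_rot_single hij, rot_mulVec_single_right hij]
  funext μ
  simp [add_smul, mul_smul, Pi.single_apply_smul, Pi.single_smul', Pi.single_neg]

lemma rho_rot_single_of_ne (hij : i ≠ j) {k : Fin n} (hki : k ≠ i) (hkj : k ≠ j)
    (M : Matrix (Fin n) (Fin n) ℝ) :
    rho (rot i j θ) (Pi.single k M) = Pi.single k (rot i j θ * M * (rot i j θ)ᵀ) := by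
  rw [rho_rot_single hij, rot_mulVec_single_of_ne hki hkj]
  funext μ
  simp [Pi.single_apply_smul]

lemma rho_rot_apply (hij : i ≠ j) (C : Fin n → Matrix (Fin n) (Fin n) ℝ) (μ a b : Fin n) :
    rho (rot i j θ) C μ a b = (rot i j θ *ᵥ fun ν => (rot i j θ *ᵥ fun y =>
      (rot i j θ *ᵥ fun x => C ν x y) a) b) μ :=
  rho_apply_of_inv_eq_transpose (inv_rot hij) C μ a b

section Invariant

variable {C : Fin n → Matrix (Fin n) (Fin n) ℝ}

lemma invariant_apply_plane_off_off (hij : i ≠ j) (hθ : Real.cos θ ≠ 1)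
    (hC : rho (rot i j θ) C = C) {a b : Fin n} (hai : a ≠ i) (haj : a ≠ j) (hbi : b ≠ i)
    (hbj : b ≠ j) :
    C i a b = 0 ∧ C j a b = 0 := by
  have hi := rho_rot_apply (θ := θ) hij C i a b
  have hj := rho_rot_apply (θ := θ) hij C j a b
  simp only [hC, rot_mulVec_apply_left hij, rot_mulVec_apply_right hij,
    rot_mulVec_apply_of_ne hai haj, rot_mulVec_apply_of_ne hbi hbj] at hi hj
  exact eq_zero_of_rotate_eq_self hθ hi.symm hj.symm

lemma invariant_apply_off_plane_off (hij : i ≠ j) (hθ : Real.cos θ ≠ 1)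
    (hC : rho (rot i j θ) C = C) {μ b : Fin n} (hμi : μ ≠ i) (hμj : μ ≠ j) (hbi : b ≠ i)
    (hbj : b ≠ j) :
    C μ i b = 0 ∧ C μ j b = 0 := by
  have hi := rho_rot_apply (θ := θ) hij C μ i b
  have hj := rho_rot_apply (θ := θ) hij C μ j b
  simp only [hC, rot_mulVec_apply_left hij, rot_mulVec_apply_right hij,
    rot_mulVec_apply_of_ne hμi hμj, rot_mulVec_apply_of_ne hbi hbj] at hi hj
  exact eq_zero_of_rotate_eq_self hθ hi.symm hj.symm

lemma invariant_apply_plane_plane_off (hij : i ≠ j) (hθ : Real.sin θ ≠ 0)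
    (hC : rho (rot i j θ) C = C) {k : Fin n} (hki : k ≠ i) (hkj : k ≠ j) :
    C j j k = C i i k ∧ C j i k = -C i j k := by
  have hii := rho_rot_apply (θ := θ) hij C i i k
  have hij' := rho_rot_apply (θ := θ) hij C i j k
  have hji := rho_rot_apply (θ := θ) hij C j i k
  have hjj := rho_rot_apply (θ := θ) hij C j j k
  simp only [hC, rot_mulVec_apply_left hij, rot_mulVec_apply_right hij,
    rot_mulVec_apply_of_ne hki hkj] at hii hij' hji hjj
  have h2θ : Real.cos (2 * θ) ≠ 1 := by
    rw [Real.cos_two_mul, Real.cos_sq']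
    intro h
    exact hθ ((pow_eq_zero_iff two_ne_zero).mp (by linarith))
  obtain ⟨hu, hv⟩ := eq_zero_of_rotate_eq_self h2θ (x := C i i k - C j j k)
    (y := C i j k + C j i k)
    (by rw [Real.cos_two_mul', Real.sin_two_mul]; linear_combination hjj - hii)
    (by rw [Real.cos_two_mul', Real.sin_two_mul]; linear_combination -hij' - hji)
  constructor <;> linarith

lemma invariant_apply_plane_plane_plane (hij : i ≠ j) (hθ : Real.cos θ ≠ 1)
    (hskew : C ∈ skewTuples) (hC : rho (rot i j θ) C = C) :
    C i i j = 0 ∧ C j i j = 0 := by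
  have hi := rho_rot_apply (θ := θ) hij C i i j
  have hj := rho_rot_apply (θ := θ) hij C j i j
  simp only [hC, rot_mulVec_apply_left hij, rot_mulVec_apply_right hij] at hi hj
  have hswap := apply_swap_of_mem_skewTuples hskew
  have hdiag : ∀ μ a, C μ a a = 0 := fun μ a => by linarith [hswap μ a a]
  simp only [hdiag, hswap _ i j] at hi hj
  refine eq_zero_of_rotate_eq_self hθ ?_ ?_
  · linear_combination -hi -
      (Real.cos θ * C i i j - Real.sin θ * C j i j) * Real.sin_sq_add_cos_sq θ
  · linear_combination -hj -
      (Real.sin θ * C i i j + Real.cos θ * C j i j) * Real.sin_sq_add_cos_sq θ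

lemma apply_eq_zero_of_mem_invariantSkewTuples (hij : i ≠ j) (hθ : Real.sin θ ≠ 0)
    (hC : C ∈ invariantSkewTuples (rot i j θ))
    (h₁ : ∀ k, k ≠ i → k ≠ j → C i i k = 0) (h₂ : ∀ k, k ≠ i → k ≠ j → C i j k = 0)
    (h₃ : ∀ k, k ≠ i → k ≠ j → C k i j = 0) (μ a b : Fin n)
    (h : μ = i ∨ μ = j ∨ a = i ∨ a = j ∨ b = i ∨ b = j) : C μ a b = 0 := by
  obtain ⟨hskew, hfix⟩ := mem_invariantSkewTuples.mp hC
  have hcos : Real.cos θ ≠ 1 := fun h => hθ (Real.sin_eq_zero_iff_cos_eq.mpr (Or.inl h))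
  have hswap := apply_swap_of_mem_skewTuples hskew
  have plane_off_off := fun a b => invariant_apply_plane_off_off (a := a) (b := b) hij hcos hfix
  have off_plane_off := fun μ b => invariant_apply_off_plane_off (μ := μ) (b := b) hij hcos hfix
  have plane_plane_off := fun k => invariant_apply_plane_plane_off (k := k) hij hθ hfix
  have plane_plane_plane := invariant_apply_plane_plane_plane hij hcos hskew hfix
  have ha := eq_or_eq_or_ne_and_ne a i j
  have hb := eq_or_eq_or_ne_and_ne b i j
  -- up to swapping `a` and `b`, every pattern meeting `{i, j}` is one of the facts above
  rcases eq_or_eq_or_ne_and_ne μ i j with rfl | rfl | ⟨hμi, hμj⟩ <;>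
    rcases ha with rfl | rfl | ⟨hai, haj⟩ <;> rcases hb with rfl | rfl | ⟨hbi, hbj⟩ <;> grind

end Invariant

end Rotation

def rotInvariantGenerators (i j : Fin n) : Set (Fin n → Matrix (Fin n) (Fin n) ℝ) :=
  {C : Fin n → Matrix (Fin n) (Fin n) ℝ |
    (∃ k l m : Fin n, l < m ∧ k ≠ i ∧ k ≠ j ∧ l ≠ i ∧ l ≠ j ∧ m ≠ i ∧ m ≠ j ∧
      C = Pi.single k (eA l m)) ∨
    (∃ k : Fin n, k ≠ i ∧ k ≠ j ∧ C = Pi.single i (eA i k) + Pi.single j (eA j k)) ∨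
    (∃ k : Fin n, k ≠ i ∧ k ≠ j ∧ C = Pi.single i (eA j k) - Pi.single j (eA i k)) ∨
    (∃ k : Fin n, k ≠ i ∧ k ≠ j ∧ C = Pi.single k (eA i j))}

section Span

variable {i j : Fin n}

lemma rotInvariantGenerators_subset {θ : ℝ} (hij : i ≠ j) :
    rotInvariantGenerators i j ⊆ invariantSkewTuples (rot i j θ) := by
  have hcs := Real.cos_sq_add_sin_sq θ
  have skew := fun k l m => single_mem_skewTuples (n := n) k (transpose_eA l m)
  rintro C (⟨k, l, m, -, hki, hkj, hli, hlj, hmi, hmj, rfl⟩ | ⟨k, hki, hkj, rfl⟩ |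
    ⟨k, hki, hkj, rfl⟩ | ⟨k, hki, hkj, rfl⟩) <;> rw [SetLike.mem_coe, mem_invariantSkewTuples]
  · refine ⟨skew k l m, ?_⟩
    rw [rho_rot_single_of_ne hij hki hkj, rot_conj_eA_of_ne hli hlj hmi hmj]
  · refine ⟨add_mem (skew i i k) (skew j j k), ?_⟩
    rw [rho_add, rho_rot_single_left hij, rho_rot_single_right hij,
      rot_conj_eA_left hij hki hkj, rot_conj_eA_right hij hki hkj]
    simp only [Pi.single_add, Pi.single_smul']
    linear_combination (norm := module) hcs • Pi.single i (eA i k) + hcs • Pi.single j (eA j k)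
  · refine ⟨sub_mem (skew i j k) (skew j i k), ?_⟩
    rw [rho_sub, rho_rot_single_left hij, rho_rot_single_right hij,
      rot_conj_eA_left hij hki hkj, rot_conj_eA_right hij hki hkj]
    simp only [Pi.single_add, Pi.single_smul']
    linear_combination (norm := module) hcs • Pi.single i (eA j k) - hcs • Pi.single j (eA i k)
  · refine ⟨skew k i j, ?_⟩
    rw [rho_rot_single_of_ne hij hki hkj, rot_conj_eA_self hij]

lemma single_eA_mem_span {k l m : Fin n} (hki : k ≠ i) (hkj : k ≠ j) (hli : l ≠ i) (hlj : l ≠ j)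
    (hmi : m ≠ i) (hmj : m ≠ j) :
    Pi.single k (eA l m) ∈ Submodule.span ℝ (rotInvariantGenerators i j) := by
  rcases lt_trichotomy l m with hlm | rfl | hml
  · exact Submodule.subset_span (Or.inl ⟨k, l, m, hlm, hki, hkj, hli, hlj, hmi, hmj, rfl⟩)
  · simp [eA]
  · rw [eA_swap, Pi.single_neg]
    exact neg_mem (Submodule.subset_span
      (Or.inl ⟨k, m, l, hml, hki, hkj, hmi, hmj, hli, hlj, rfl⟩))

lemma mem_span_of_apply_eq_zero {C : Fin n → Matrix (Fin n) (Fin n) ℝ} (hC : C ∈ skewTuples)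
    (hzero : ∀ k l m, (k = i ∨ k = j ∨ l = i ∨ l = j ∨ m = i ∨ m = j) → C k l m = 0) :
    C ∈ Submodule.span ℝ (rotInvariantGenerators i j) := by
  rw [eq_sum_single_eA hC]
  refine Submodule.smul_mem _ _ (Submodule.sum_mem _ fun k _ => Submodule.sum_mem _ fun l _ =>
    Submodule.sum_mem _ fun m _ => ?_)
  by_cases h : k = i ∨ k = j ∨ l = i ∨ l = j ∨ m = i ∨ m = j
  · simp [hzero k l m h]
  · simp only [not_or] at h
    obtain ⟨hki, hkj, hli, hlj, hmi, hmj⟩ := h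
    exact Submodule.smul_mem _ _ (single_eA_mem_span hki hkj hli hlj hmi hmj)

def planePart (i j : Fin n) (C : Fin n → Matrix (Fin n) (Fin n) ℝ) :
    Fin n → Matrix (Fin n) (Fin n) ℝ :=
  ∑ k ∈ {k | k ≠ i ∧ k ≠ j},
    (C i i k • (Pi.single i (eA i k) + Pi.single j (eA j k)) +
      C i j k • (Pi.single i (eA j k) - Pi.single j (eA i k)) +
        C k i j • (Pi.single k (eA i j) : Fin n → Matrix (Fin n) (Fin n) ℝ))

lemma planePart_mem_span (C : Fin n → Matrix (Fin n) (Fin n) ℝ) :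
    planePart i j C ∈ Submodule.span ℝ (rotInvariantGenerators i j) := by
  refine Submodule.sum_mem _ fun k hk => ?_
  obtain ⟨hki, hkj⟩ := (Finset.mem_filter.mp hk).2
  refine add_mem (add_mem (Submodule.smul_mem _ _ ?_) (Submodule.smul_mem _ _ ?_))
    (Submodule.smul_mem _ _ ?_) <;> apply Submodule.subset_span
  exacts [Or.inr (Or.inl ⟨k, hki, hkj, rfl⟩), Or.inr (Or.inr (Or.inl ⟨k, hki, hkj, rfl⟩)),
    Or.inr (Or.inr (Or.inr ⟨k, hki, hkj, rfl⟩))]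

lemma planePart_apply (hij : i ≠ j) (C : Fin n → Matrix (Fin n) (Fin n) ℝ) {k : Fin n}
    (hki : k ≠ i) (hkj : k ≠ j) :
    planePart i j C i i k = C i i k ∧ planePart i j C i j k = C i j k ∧
      planePart i j C k i j = C k i j := by
  have hk : k ∈ ({k | k ≠ i ∧ k ≠ j} : Finset (Fin n)) := by simp [hki, hkj]
  simp only [planePart, Finset.sum_apply, Matrix.sum_apply]
  refine ⟨?_, ?_, ?_⟩ <;> rw [Finset.sum_eq_single_of_mem k hk fun c hc hck => ?_] <;>
    simp_all [eA_apply, hij.symm, hki.symm, hkj.symm]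

lemma invariantSkewTuples_le_span {θ : ℝ} (hij : i ≠ j) (hθ : Real.sin θ ≠ 0) :
    invariantSkewTuples (rot i j θ) ≤ Submodule.span ℝ (rotInvariantGenerators i j) := by
  intro C hC
  have hS := planePart_mem_span (i := i) (j := j) C
  have hD : C - planePart i j C ∈ invariantSkewTuples (rot i j θ) :=
    sub_mem hC (Submodule.span_le.mpr (rotInvariantGenerators_subset hij) hS)
  have hDspan := mem_span_of_apply_eq_zero hD.1
    (apply_eq_zero_of_mem_invariantSkewTuples hij hθ hD
      (fun k hki hkj => by simp [(planePart_apply hij C hki hkj).1])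
      (fun k hki hkj => by simp [(planePart_apply hij C hki hkj).2.1])
      (fun k hki hkj => by simp [(planePart_apply hij C hki hkj).2.2]))
  simpa using add_mem hDspan hS

end Span

end

theorem stmt2_general (n : ℕ) (i j : Fin n) (hij : i < j) (θ : ℝ)
    (hθ : Real.sin θ ≠ 0) :
    {C : Fin n → Matrix (Fin n) (Fin n) ℝ |
        (∀ μ, (C μ)ᵀ = -(C μ)) ∧ rho (rot i j θ) C = C} =
      (Submodule.span ℝ
        {C : Fin n → Matrix (Fin n) (Fin n) ℝ |
          (∃ k l m : Fin n, l < m ∧ k ≠ i ∧ k ≠ j ∧ l ≠ i ∧ l ≠ j ∧ m ≠ i ∧ m ≠ j ∧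
            C = Pi.single k (eA l m)) ∨
          (∃ k : Fin n, k ≠ i ∧ k ≠ j ∧
            C = Pi.single i (eA i k) + Pi.single j (eA j k)) ∨
          (∃ k : Fin n, k ≠ i ∧ k ≠ j ∧
            C = Pi.single i (eA j k) - Pi.single j (eA i k)) ∨
          (∃ k : Fin n, k ≠ i ∧ k ≠ j ∧ C = Pi.single k (eA i j))} : Set _) := by
  change SetLike.coe (invariantSkewTuples (rot i j θ)) =
    SetLike.coe (Submodule.span ℝ (rotInvariantGenerators i j))
  exact congrArg SetLike.coe (le_antisymm (invariantSkewTuples_le_span hij.ne hθ)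
    (Submodule.span_le.mpr (rotInvariantGenerators_subset hij.ne)))

theorem stmt2 (n : ℕ) (hn : 3 ≤ n) (i j : Fin n) (hij : i < j) (θ : ℝ)
    (hθ : Real.sin θ ≠ 0) :
    {C : Fin n → Matrix (Fin n) (Fin n) ℝ |
        (∀ μ, (C μ)ᵀ = -(C μ)) ∧ rho (rot i j θ) C = C} =
      (Submodule.span ℝ
        {C : Fin n → Matrix (Fin n) (Fin n) ℝ |
          (∃ k l m : Fin n, l < m ∧ k ≠ i ∧ k ≠ j ∧ l ≠ i ∧ l ≠ j ∧ m ≠ i ∧ m ≠ j ∧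
            C = Pi.single k (eA l m)) ∨
          (∃ k : Fin n, k ≠ i ∧ k ≠ j ∧
            C = Pi.single i (eA i k) + Pi.single j (eA j k)) ∨
          (∃ k : Fin n, k ≠ i ∧ k ≠ j ∧
            C = Pi.single i (eA j k) - Pi.single j (eA i k)) ∨
          (∃ k : Fin n, k ≠ i ∧ k ≠ j ∧ C = Pi.single k (eA i j))} : Set _) :=
  stmt2_general n i j hij θ hθ
end
end

section
/- Let n ≥ 5 and let B : ℝⁿ → (so(n))ⁿ be algebraically SO(n)-equivariant. Then there exists a function g : [0,∞) → ℝ such that for every x ∈ ℝⁿ, all indices μ, i, j: (B_μ(x))_{i,j} = g(|x|)·(δ_{j,μ} x_i − δ_{i,μ} x_j), where |x| is the Euclidean norm of x and δ is the Kronecker delta. -/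
/-! Write `e_z` for the `z`-th basis vector. A signed permutation matrix of determinant one that
fixes `r e_z` conjugates `B (r e_z)` into itself, up to the signs it carries. Flipping two axes
other than `z` (with five axes there is always a spare one) kills every entry of `B (r e_z)` except
`B_μ(r e_z)_{zμ} = -B_μ(r e_z)_{μz}`, `μ ≠ z`, and a quarter turn in the `(μ, ν)`-plane shows that
these entries do not depend on `μ`. So `B (r e_z) = g(r) · (r e_z ∧ e_μ)`. The field
`x ↦ x ∧ e_μ` is itself equivariant, and `SO(n)` acts transitively on spheres, so the formula
holds at every `x`. -/

open Matrix BigOperators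

noncomputable section

/-- Euclidean norm on `ℝⁿ`. -/
def nrm {n : ℕ} (x : Fin n → ℝ) : ℝ := Real.sqrt (∑ i, x i ^ 2)

section SignedPerm

variable {ι R : Type*} [Fintype ι] [DecidableEq ι] [CommRing R]

def signedPerm (σ : Equiv.Perm ι) (s : ι → R) : Matrix ι ι R :=
  Matrix.of fun a b => if σ b = a then s b else 0

variable (σ : Equiv.Perm ι) (s : ι → R)

omit [Fintype ι] in
theorem signedPerm_apply (a b : ι) : signedPerm σ s a b = if b = σ⁻¹ a then s b else 0 := by
  simp [signedPerm, Equiv.eq_symm_apply]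

theorem signedPerm_eq_permMatrix_mul_diagonal :
    signedPerm σ s = σ⁻¹.permMatrix R * diagonal s := by
  ext a b
  simp [signedPerm_apply, PEquiv.toMatrix_apply, eq_comm]

theorem det_signedPerm : (signedPerm σ s).det = Equiv.Perm.sign σ * ∏ k, s k := by
  simp [signedPerm_eq_permMatrix_mul_diagonal, det_diagonal]

theorem transpose_signedPerm_mul_self (hs : ∀ k, s k * s k = 1) :
    (signedPerm σ s)ᵀ * signedPerm σ s = 1 := by
  ext a b
  simp only [signedPerm, mul_apply, transpose_apply, of_apply, mul_ite, ite_mul, zero_mul, mul_zero,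
    Finset.sum_ite_eq, Finset.mem_univ, ↓reduceIte, EmbeddingLike.apply_eq_iff_eq, one_apply]
  split_ifs with h <;> simp [h, hs]

theorem signedPerm_mulVec (x : ι → R) (a : ι) :
    (signedPerm σ s *ᵥ x) a = s (σ⁻¹ a) * x (σ⁻¹ a) := by
  simp [mulVec, dotProduct, signedPerm_apply, ite_mul]

theorem signedPerm_mulVec_single (z : ι) (r : R) :
    signedPerm σ s *ᵥ Pi.single z r = Pi.single (σ z) (s z * r) := by
  ext a
  rw [signedPerm_mulVec]
  by_cases h : a = σ z
  · simp [h]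
  · simp [h, Equiv.symm_apply_eq]

theorem signedPerm_mul_mul_transpose_apply (M : Matrix ι ι R) (i j : ι) :
    (signedPerm σ s * M * (signedPerm σ s)ᵀ) i j
      = s (σ⁻¹ i) * s (σ⁻¹ j) * M (σ⁻¹ i) (σ⁻¹ j) := by
  simp only [mul_apply, signedPerm_apply, transpose_apply, ite_mul, mul_ite, zero_mul, mul_zero,
    Finset.sum_ite_eq', Finset.mem_univ, if_true]
  ring

end SignedPerm

section Wedge

variable {ι R : Type*} [CommRing R]

def wedge (u v : ι → R) : Matrix ι ι R := vecMulVec u v - vecMulVec v u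

theorem wedge_apply (u v : ι → R) (i j : ι) : wedge u v i j = u i * v j - v i * u j := rfl

theorem sum_smul_wedge {κ : Type*} [Fintype κ] (u : ι → R) (c : κ → R) (v : κ → ι → R) :
    ∑ k, c k • wedge u (v k) = wedge u (∑ k, c k • v k) := by
  ext i j
  simp only [Matrix.sum_apply, Matrix.smul_apply, wedge_apply, Finset.sum_apply, Pi.smul_apply,
    smul_eq_mul, Finset.mul_sum, Finset.sum_mul, ← Finset.sum_sub_distrib]
  exact Finset.sum_congr rfl fun _ _ => by ring

variable [Fintype ι]

theorem mul_wedge_mul_transpose (Λ : Matrix ι ι R) (u v : ι → R) :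
    Λ * wedge u v * Λᵀ = wedge (Λ *ᵥ u) (Λ *ᵥ v) := by
  simp only [wedge, Matrix.mul_sub, Matrix.sub_mul, mul_vecMulVec, vecMulVec_mul, vecMul_transpose]

theorem sum_smul_mul_wedge_single_mul_transpose [DecidableEq ι] {Λ : Matrix ι ι R}
    (hΛ : Λ * Λᵀ = 1) (u : ι → R) (μ : ι) :
    ∑ ν, Λᵀ ν μ • (Λ * wedge u (Pi.single ν 1) * Λᵀ) = wedge (Λ *ᵥ u) (Pi.single μ 1) := by
  simp_rw [mul_wedge_mul_transpose, sum_smul_wedge, mulVec_single_one]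
  congr 1
  ext i
  simpa [mul_apply, mul_comm, one_apply, Pi.single_apply] using congrFun₂ hΛ i μ

end Wedge

theorem Finset.exists_notMem_of_four_lt_card {ι : Type*} [Fintype ι] [DecidableEq ι]
    (h : 4 < Fintype.card ι) (a b c d : ι) : ∃ q, q ∉ ({a, b, c, d} : Finset ι) := by
  obtain ⟨q, -, hq⟩ := Finset.exists_mem_notMem_of_card_lt_card
    (Finset.card_le_four.trans_lt (h.trans_eq Finset.card_univ.symm))
  exact ⟨q, hq⟩

def flipSign {ι : Type*} [DecidableEq ι] (p k : ι) : ℝ := if k = p then -1 else 1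

section FlipSign

variable {ι : Type*} [DecidableEq ι] {p k : ι}

@[simp] theorem flipSign_self : flipSign p p = -1 := if_pos rfl

theorem flipSign_of_ne (h : k ≠ p) : flipSign p k = 1 := if_neg h

theorem flipSign_mul_self (p k : ι) : flipSign p k * flipSign p k = 1 := by
  unfold flipSign; split_ifs <;> norm_num

theorem prod_flipSign [Fintype ι] (p : ι) : ∏ k, flipSign p k = -1 := by
  simp [flipSign, Finset.prod_ite_eq']

end FlipSign

theorem exists_transpose_mul_self_eq_one_mulVec_single {ι : Type*} [Fintype ι] [DecidableEq ι]
    (z : ι) (x : ι → ℝ) :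
    ∃ Λ : Matrix ι ι ℝ, Λᵀ * Λ = 1 ∧ Λ *ᵥ Pi.single z √(∑ i, x i ^ 2) = x := by
  rcases eq_or_ne x 0 with rfl | hx
  · exact ⟨1, by simp⟩
  set v : EuclideanSpace ℝ ι := WithLp.toLp 2 x
  have hnorm : ‖v‖ = √(∑ i, x i ^ 2) := by simp [v, EuclideanSpace.norm_eq]
  have hv : ‖v‖ ≠ 0 := by simpa [v] using hx
  have hu : Orthonormal ℝ (({z} : Set ι).domRestrict fun _ => ‖v‖⁻¹ • v) :=
    orthonormal_subsingleton_iff.mpr fun _ => by simp [norm_smul, hv]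
  obtain ⟨b, hb⟩ := hu.exists_orthonormalBasis_extension_of_card_eq (by simp)
  set Λ := (EuclideanSpace.basisFun ι ℝ).toBasis.toMatrix b
  have hcol : Λ.col z = ‖v‖⁻¹ • x := by
    ext i
    simp [Λ, Module.Basis.toMatrix_apply, hb z rfl, v]
  refine ⟨Λ, ?_, ?_⟩
  · simpa [conjTranspose_eq_transpose_of_trivial] using
      (EuclideanSpace.basisFun ι ℝ).toMatrix_orthonormalBasis_conjTranspose_mul_self b
  · rw [← hnorm, mulVec_single, op_smul_eq_smul, hcol, smul_inv_smul₀ hv]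

theorem exists_transpose_mul_self_eq_one_det_eq_one_mulVec_single {ι : Type*} [Fintype ι]
    [DecidableEq ι] {z o : ι} (hoz : o ≠ z) (x : ι → ℝ) :
    ∃ Λ : Matrix ι ι ℝ, Λᵀ * Λ = 1 ∧ Λ.det = 1 ∧ Λ *ᵥ Pi.single z √(∑ i, x i ^ 2) = x := by
  obtain ⟨Λ, hΛ, hx⟩ := exists_transpose_mul_self_eq_one_mulVec_single z x
  have hdet : Λ.det * Λ.det = 1 := by
    simpa [det_transpose] using congrArg det hΛ
  rcases mul_self_eq_one_iff.mp hdet with hdet | hdet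
  · exact ⟨Λ, hΛ, hdet, hx⟩
  refine ⟨Λ * signedPerm 1 (flipSign o), ?_, ?_, ?_⟩
  · rw [transpose_mul, Matrix.mul_assoc, ← Matrix.mul_assoc Λᵀ, hΛ, Matrix.one_mul,
      transpose_signedPerm_mul_self _ _ (flipSign_mul_self o)]
  · rw [det_mul, hdet, det_signedPerm, prod_flipSign]
    norm_num
  · rw [← mulVec_mulVec, signedPerm_mulVec_single, flipSign_of_ne hoz.symm, one_mul]
    exact hx

def IsSOEquivariant {ι : Type*} [Fintype ι] [DecidableEq ι]
    (B : (ι → ℝ) → ι → Matrix ι ι ℝ) : Prop :=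
  ∀ Λ : Matrix ι ι ℝ, Λᵀ * Λ = 1 → Λ.det = 1 →
    ∀ (x : ι → ℝ) (μ : ι), B (Λ *ᵥ x) μ = ∑ ν, Λ⁻¹ ν μ • (Λ * B x ν * Λ⁻¹)

namespace IsSOEquivariant

variable {ι : Type*} [Fintype ι] [DecidableEq ι] {B : (ι → ℝ) → ι → Matrix ι ι ℝ}
  (hB : IsSOEquivariant B)
include hB

theorem apply_signedPerm_mulVec {σ : Equiv.Perm ι} {s : ι → ℝ} (hs : ∀ k, s k * s k = 1)
    (hdet : Equiv.Perm.sign σ * ∏ k, s k = 1) (x : ι → ℝ) (μ i j : ι) :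
    B (signedPerm σ s *ᵥ x) μ i j
      = s (σ⁻¹ μ) * s (σ⁻¹ i) * s (σ⁻¹ j) * B x (σ⁻¹ μ) (σ⁻¹ i) (σ⁻¹ j) := by
  have hT := transpose_signedPerm_mul_self σ s hs
  rw [hB _ hT (by rw [det_signedPerm, hdet]), inv_eq_left_inv hT]
  simp only [Matrix.sum_apply, Matrix.smul_apply, signedPerm_mul_mul_transpose_apply,
    transpose_apply, signedPerm_apply, smul_eq_mul, ite_mul, zero_mul, Finset.sum_ite_eq',
    Finset.mem_univ, if_true]
  ring

theorem apply_mulVec_eq_smul_wedge {Λ : Matrix ι ι ℝ} (hΛ : Λᵀ * Λ = 1) (hdet : Λ.det = 1)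
    {y : ι → ℝ} {c : ℝ} (hy : ∀ ν, B y ν = c • wedge y (Pi.single ν 1)) (μ : ι) :
    B (Λ *ᵥ y) μ = c • wedge (Λ *ᵥ y) (Pi.single μ 1) := by
  rw [hB Λ hΛ hdet, inv_eq_left_inv hΛ]
  simp_rw [hy, Matrix.mul_smul, Matrix.smul_mul, smul_comm _ c]
  rw [← Finset.smul_sum, sum_smul_mul_wedge_single_mul_transpose (mul_eq_one_comm.mpr hΛ)]

theorem apply_single_eq_flipSign_mul {z p : ι} (hcard : 4 < Fintype.card ι) (hpz : p ≠ z)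
    (r : ℝ) {μ i j : ι} (hp : p = μ ∨ p = i ∨ p = j) :
    B (Pi.single z r) μ i j
      = flipSign p μ * flipSign p i * flipSign p j * B (Pi.single z r) μ i j := by
  -- flip the axes `p` and a spare `q`; `q` exists because `p ∈ {μ, i, j}`
  obtain ⟨q, hq⟩ := Finset.exists_notMem_of_four_lt_card hcard z μ i j
  simp only [Finset.mem_insert, Finset.mem_singleton, not_or] at hq
  obtain ⟨hqz, hqμ, hqi, hqj⟩ := hq
  have hpq : p ≠ q := by rcases hp with rfl | rfl | rfl <;> exact Ne.symm ‹_›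
  have hs : ∀ k, (flipSign p * flipSign q) k * (flipSign p * flipSign q) k = 1 := fun k => by
    rw [Pi.mul_apply, mul_mul_mul_comm, flipSign_mul_self, flipSign_mul_self, one_mul]
  have hdet : Equiv.Perm.sign (1 : Equiv.Perm ι) * ∏ k, (flipSign p * flipSign q) k = 1 := by
    simp [Finset.prod_mul_distrib, prod_flipSign]
  have hfix : signedPerm 1 (flipSign p * flipSign q) *ᵥ Pi.single z r = Pi.single z r := by
    rw [signedPerm_mulVec_single, Pi.mul_apply, flipSign_of_ne hpz.symm,
      flipSign_of_ne (Ne.symm hqz), one_mul, one_mul, Equiv.Perm.coe_one, id]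
  have := hB.apply_signedPerm_mulVec hs hdet (Pi.single z r) μ i j
  simp only [hfix, inv_one, Equiv.Perm.coe_one, id, Pi.mul_apply, flipSign_of_ne (Ne.symm hqμ),
    flipSign_of_ne (Ne.symm hqi), flipSign_of_ne (Ne.symm hqj), mul_one] at this
  exact this

theorem apply_single_eq_zero {z μ i j : ι} (hcard : 4 < Fintype.card ι) (hij : i ≠ j)
    (h₁ : ¬(i = z ∧ j = μ)) (h₂ : ¬(j = z ∧ i = μ)) (r : ℝ) :
    B (Pi.single z r) μ i j = 0 := by
  suffices ∃ p ≠ z, (p = μ ∨ p = i ∨ p = j) ∧ flipSign p μ * flipSign p i * flipSign p j = -1 by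
    obtain ⟨p, hpz, hp, hsign⟩ := this
    have := hB.apply_single_eq_flipSign_mul hcard hpz r hp
    rw [hsign] at this
    linarith
  by_cases hμi : μ = i
  · subst hμi
    refine ⟨j, fun h => h₂ ⟨h, rfl⟩, by simp, ?_⟩
    rw [flipSign_of_ne hij, flipSign_self]; norm_num
  by_cases hμj : μ = j
  · subst hμj
    refine ⟨i, fun h => h₁ ⟨h, rfl⟩, by simp, ?_⟩
    rw [flipSign_of_ne hij.symm, flipSign_self]; norm_num
  by_cases hμz : μ = z
  · subst hμz
    refine ⟨i, Ne.symm hμi, by simp, ?_⟩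
    rw [flipSign_of_ne hμi, flipSign_of_ne (Ne.symm hij), flipSign_self]; norm_num
  · refine ⟨μ, hμz, by simp, ?_⟩
    rw [flipSign_of_ne (Ne.symm hμi), flipSign_of_ne (Ne.symm hμj), flipSign_self]; norm_num

theorem apply_single_eq_of_ne {z μ ν : ι} (hμ : μ ≠ z) (hν : ν ≠ z) (r : ℝ) :
    B (Pi.single z r) μ z μ = B (Pi.single z r) ν z ν := by
  rcases eq_or_ne μ ν with rfl | hμν
  · rfl
  have hdet : Equiv.Perm.sign (Equiv.swap μ ν) * ∏ k, flipSign ν k = 1 := by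
    rw [Equiv.Perm.sign_swap hμν, prod_flipSign]; norm_num
  have hσz : Equiv.swap μ ν z = z := Equiv.swap_apply_of_ne_of_ne hμ.symm hν.symm
  have hfix : signedPerm (Equiv.swap μ ν) (flipSign ν) *ᵥ Pi.single z r = Pi.single z r := by
    rw [signedPerm_mulVec_single, hσz, flipSign_of_ne hν.symm, one_mul]
  have := hB.apply_signedPerm_mulVec (flipSign_mul_self ν) hdet (Pi.single z r) μ z μ
  rw [hfix, Equiv.swap_inv, Equiv.swap_apply_left, hσz, flipSign_self,
    flipSign_of_ne hν.symm] at this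
  simpa using this

theorem apply_single_eq_smul_wedge (hskew : ∀ x μ, (B x μ)ᵀ = -B x μ)
    (hcard : 4 < Fintype.card ι) {z o : ι} (hoz : o ≠ z) (r : ℝ) (μ : ι) :
    B (Pi.single z r) μ
      = (B (Pi.single z r) o z o / r) • wedge (Pi.single z r) (Pi.single μ 1) := by
  have hsk : ∀ i j, B (Pi.single z r) μ j i = -B (Pi.single z r) μ i j := fun i j => by
    simpa using congrFun₂ (hskew (Pi.single z r) μ) i j
  have hμzμ (hμ : μ ≠ z) : B (Pi.single z r) μ z μ = B (Pi.single z r) o z o / r * r := by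
    rcases eq_or_ne r 0 with rfl | hr
    -- `0 / 0 = 0`, so here the entry must vanish: view `0` as `0 • e_{z'}` for another axis `z'`
    · obtain ⟨z', hz'⟩ := Finset.exists_notMem_of_four_lt_card hcard z μ μ μ
      simp only [Finset.mem_insert, Finset.mem_singleton, not_or] at hz'
      rw [div_zero, zero_mul, Pi.single_zero, ← Pi.single_zero z']
      exact hB.apply_single_eq_zero hcard hμ.symm (fun h => hz'.1 h.1.symm)
        (fun h => hz'.2.1 h.1.symm) 0
    · rw [div_mul_cancel₀ _ hr, hB.apply_single_eq_of_ne hμ hoz]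
  ext i j
  rw [Matrix.smul_apply, wedge_apply, smul_eq_mul]
  by_cases hij : i = j
  · subst hij
    rw [show B (Pi.single z r) μ i i = 0 by linarith [hsk i i]]
    ring
  by_cases h₁ : i = z ∧ j = μ
  · obtain ⟨rfl, rfl⟩ := h₁
    rw [hμzμ (Ne.symm hij)]
    simp [Ne.symm hij]
  by_cases h₂ : j = z ∧ i = μ
  · obtain ⟨rfl, rfl⟩ := h₂
    rw [hsk, hμzμ hij]
    simp [hij]
  rw [hB.apply_single_eq_zero hcard hij h₁ h₂ r]
  simp only [Pi.single_apply]
  split_ifs <;> first | ring1 | exact absurd ⟨‹_›, ‹_›⟩ h₁ | exact absurd ⟨‹_›, ‹_›⟩ h₂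

end IsSOEquivariant

theorem stmt6 (n : ℕ) (hn : 5 ≤ n)
    (B : (Fin n → ℝ) → Fin n → Matrix (Fin n) (Fin n) ℝ)
    (hskew : ∀ x μ, (B x μ)ᵀ = -(B x μ))
    (hequiv : ∀ Λ : Matrix (Fin n) (Fin n) ℝ, Λᵀ * Λ = 1 → Λ.det = 1 →
      ∀ (x : Fin n → ℝ) (μ : Fin n),
        B (Λ *ᵥ x) μ = ∑ ν, Λ⁻¹ ν μ • (Λ * B x ν * Λ⁻¹)) :
    ∃ g : ℝ → ℝ, ∀ (x : Fin n → ℝ) (μ i j : Fin n),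
      (B x μ) i j = g (nrm x) *
        ((if j = μ then 1 else 0) * x i - (if i = μ then 1 else 0) * x j) := by
  have hB : IsSOEquivariant B := hequiv
  have hcard : 4 < Fintype.card (Fin n) := by rw [Fintype.card_fin]; omega
  let z : Fin n := ⟨0, by omega⟩
  let o : Fin n := ⟨1, by omega⟩
  have hoz : o ≠ z := by simp [z, o, Fin.ext_iff]
  refine ⟨fun r => B (Pi.single z r) o z o / r, fun x μ i j => ?_⟩
  obtain ⟨Λ, hΛ, hdet, hx⟩ := exists_transpose_mul_self_eq_one_det_eq_one_mulVec_single hoz x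
  have := hB.apply_mulVec_eq_smul_wedge hΛ hdet
    (hB.apply_single_eq_smul_wedge hskew hcard hoz (nrm x)) μ
  rw [nrm, hx] at this
  rw [this, nrm, Matrix.smul_apply, wedge_apply, smul_eq_mul, Pi.single_apply, Pi.single_apply]
  ring
end
end

section
/- Let p, q ≥ 1, n = p+q, and let g be a real n×n matrix with gᵀ I_{p,q} g = I_{p,q} (so g⁻¹ = I_{p,q} gᵀ I_{p,q}), regarded as a complex matrix. Suppose v, w, u ∈ ℂⁿ satisfy g·v = a·v, g·w = b·w, g·u = c·u for complex scalars a, b, c. Define the n-tuple C of complex n×n matrices by C_α := (I_{p,q} v)_α · ((w uᵀ − u wᵀ)·I_{p,q}) for α = 1,…,n. Then each C_α satisfies C_αᵀ I_{p,q} + I_{p,q} C_α = 0, and ρ(g)C = (a·b·c)·C, i.e. Σ_{ν=1}^n (g⁻¹)_{ν,α} · g C_ν g⁻¹ = a·b·c·C_α for every α. -/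
open Matrix BigOperators

noncomputable section

/-- `I_{p,q} = diag(1,…,1,−1,…,−1)` with `p` ones and `q` minus-ones. -/
def Ipq (p q : ℕ) : Matrix (Fin (p + q)) (Fin (p + q)) ℝ :=
  Matrix.diagonal fun i => if (i : ℕ) < p then 1 else -1

/-- `I_{p,q}` regarded as a complex matrix. -/
def IpqC (p q : ℕ) : Matrix (Fin (p + q)) (Fin (p + q)) ℂ :=
  Matrix.diagonal fun i => if (i : ℕ) < p then 1 else -1

lemma sandwich {n : ℕ} (G : Matrix (Fin n) (Fin n) ℂ) (x y : Fin n → ℂ) :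
    G * vecMulVec x y * Gᵀ = vecMulVec (G *ᵥ x) (G *ᵥ y) := by
  ext i j
  simp only [Matrix.mul_apply, vecMulVec_apply, Matrix.mulVec, dotProduct,
    transpose_apply, Finset.sum_mul, Finset.mul_sum]
  exact Finset.sum_congr rfl fun k _ => Finset.sum_congr rfl fun l _ => by ring

lemma vMV_transpose {n : ℕ} (x y : Fin n → ℂ) :
    (vecMulVec x y)ᵀ = vecMulVec y x := by
  ext i j; simp [vecMulVec_apply, mul_comm]

lemma vMV_smul_left {n : ℕ} (r : ℂ) (x y : Fin n → ℂ) :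
    vecMulVec (r • x) y = r • vecMulVec x y := by
  ext i j; simp [vecMulVec_apply, mul_assoc]

lemma vMV_smul_right {n : ℕ} (r : ℂ) (x y : Fin n → ℂ) :
    vecMulVec x (r • y) = r • vecMulVec x y := by
  ext i j; simp [vecMulVec_apply]; ring

theorem stmt10 (p q : ℕ) (hp : 1 ≤ p) (hq : 1 ≤ q)
    (g : Matrix (Fin (p + q)) (Fin (p + q)) ℝ)
    (hg : gᵀ * Ipq p q * g = Ipq p q)
    (v w u : Fin (p + q) → ℂ) (a b c : ℂ)
    (hv : (g.map Complex.ofReal) *ᵥ v = a • v)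
    (hw : (g.map Complex.ofReal) *ᵥ w = b • w)
    (hu : (g.map Complex.ofReal) *ᵥ u = c • u)
    (C : Fin (p + q) → Matrix (Fin (p + q)) (Fin (p + q)) ℂ)
    (hC : ∀ α, C α = (IpqC p q *ᵥ v) α • ((vecMulVec w u - vecMulVec u w) * IpqC p q)) :
    (∀ α, (C α)ᵀ * IpqC p q + IpqC p q * C α = 0) ∧
      ∀ α : Fin (p + q),
        (∑ ν, ((g.map Complex.ofReal)⁻¹ ν α) •
            ((g.map Complex.ofReal) * C ν * (g.map Complex.ofReal)⁻¹))
          = (a * b * c) • C α := by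
  set G := g.map Complex.ofReal with hGdef
  set J := IpqC p q with hJdef
  set M := vecMulVec w u - vecMulVec u w with hMdef
  have hJT : Jᵀ = J := by simp [hJdef, IpqC]
  have hJ2 : J * J = 1 := by
    have hfun : (fun i : Fin (p + q) =>
        (if (i : ℕ) < p then (1 : ℂ) else -1) * (if (i : ℕ) < p then 1 else -1)) =
        fun _ => (1 : ℂ) := by funext i; split <;> norm_num
    rw [hJdef, IpqC, Matrix.diagonal_mul_diagonal, hfun, Matrix.diagonal_one]
  have hmap : (Ipq p q).map Complex.ofReal = J := by
    ext i j
    simp only [Ipq, IpqC, hJdef, Matrix.map_apply, Matrix.diagonal_apply]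
    split_ifs <;> simp
  have hGJG : Gᵀ * J * G = J := by
    have := congrArg (fun M : Matrix _ _ ℝ => M.map (Complex.ofRealHom : ℝ →+* ℂ)) hg
    simp only [Matrix.map_mul, Matrix.transpose_map] at this
    have hco : ⇑(Complex.ofRealHom) = Complex.ofReal := rfl
    rw [hco, hmap] at this
    exact this
  have hleft : (J * Gᵀ * J) * G = 1 := by
    calc (J * Gᵀ * J) * G = J * (Gᵀ * J * G) := by noncomm_ring
    _ = J * J := by rw [hGJG]
    _ = 1 := hJ2
  have hGinv : G⁻¹ = J * Gᵀ * J := Matrix.inv_eq_left_inv hleft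
  have hMT : Mᵀ = -M := by
    rw [hMdef, transpose_sub, vMV_transpose, vMV_transpose]; abel
  constructor
  · intro α
    have key : (M * J)ᵀ * J + J * (M * J) = 0 := by
      rw [transpose_mul, hJT, hMT]; noncomm_ring
    rw [hC, transpose_smul, smul_mul_assoc, mul_smul_comm, ← smul_add, key, smul_zero]
  · intro α
    have hscal : ∑ ν, G⁻¹ ν α • (J *ᵥ v) ν = a * (J *ᵥ v) α := by
      have h2 : (J *ᵥ v) ᵥ* J = v := by
        have := Matrix.vecMul_transpose J (J *ᵥ v)
        rw [hJT] at this
        rw [this, Matrix.mulVec_mulVec, hJ2, Matrix.one_mulVec]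
      have h3 : v ᵥ* Gᵀ = a • v := by rw [Matrix.vecMul_transpose, hv]
      have h4 : v ᵥ* J = J *ᵥ v := by
        have := Matrix.vecMul_transpose J v
        rwa [hJT] at this
      have h1 : ((J *ᵥ v) ᵥ* G⁻¹) = a • (J *ᵥ v) := by
        rw [hGinv, ← Matrix.vecMul_vecMul, ← Matrix.vecMul_vecMul, h2, h3,
          Matrix.smul_vecMul, h4]
      have := congrFun h1 α
      simp only [Matrix.vecMul, dotProduct, Pi.smul_apply, smul_eq_mul] at this
      rw [← this]
      exact Finset.sum_congr rfl fun ν _ => by rw [smul_eq_mul]; ring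
    have hJGi : J * G⁻¹ = Gᵀ * J := by
      rw [hGinv]
      calc J * (J * Gᵀ * J) = (J * J) * (Gᵀ * J) := by noncomm_ring
      _ = Gᵀ * J := by rw [hJ2, one_mul]
    have hT : G * (M * J) * G⁻¹ = (b * c) • (M * J) := by
      calc G * (M * J) * G⁻¹ = G * M * (J * G⁻¹) := by noncomm_ring
      _ = G * M * (Gᵀ * J) := by rw [hJGi]
      _ = (G * M * Gᵀ) * J := by noncomm_ring
      _ = ((b * c) • M) * J := by
            rw [hMdef, mul_sub, sub_mul, sandwich, sandwich, hw, hu,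
              vMV_smul_left, vMV_smul_right, vMV_smul_left, vMV_smul_right,
              smul_smul, smul_smul, mul_comm c b, ← smul_sub]
      _ = (b * c) • (M * J) := by rw [smul_mul_assoc]
    calc (∑ ν, G⁻¹ ν α • (G * C ν * G⁻¹))
        = ∑ ν, (G⁻¹ ν α • (J *ᵥ v) ν) • (G * (M * J) * G⁻¹) := by
          refine Finset.sum_congr rfl fun ν _ => ?_
          rw [hC]
          simp only [smul_eq_mul, mul_smul_comm, smul_mul_assoc, smul_smul]
      _ = (∑ ν, G⁻¹ ν α • (J *ᵥ v) ν) • (G * (M * J) * G⁻¹) := by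
          rw [Finset.sum_smul]
      _ = (a * (J *ᵥ v) α) • ((b * c) • (M * J)) := by rw [hscal, hT]
      _ = (a * b * c) • C α := by
          rw [hC, smul_smul, smul_smul]; ring_nf
end
end

section
/- Let p, q ≥ 1, n = p+q, and let g : (0,∞) → ℝ be smooth. Define f_{k,μ} := e^A_{k,μ}·I_{p,q}, X_μ(x) := Σ_{k=1}^n x_k f_{k,μ}, and B_μ(x) := g(‖x‖)·X_μ(x) for x ∈ M_{p,q}. Then for all indices α, β and every x ∈ M_{p,q}, writing r := ‖x‖, the curvature F_{α,β}(x) := ∂B_β/∂x_α (x) − ∂B_α/∂x_β (x) + [B_α(x), B_β(x)] satisfies F_{α,β}(x) = (g'(r)/r + g(r)²)·(ε(α) x_α X_β(x) − ε(β) x_β X_α(x)) + g(r)·(2 − r² g(r))·f_{α,β}, where [·,·] is the matrix commutator. -/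
open Matrix BigOperators

noncomputable section

attribute [local instance] Matrix.normedAddCommGroup Matrix.normedSpace

/-- The quadratic form `xᵀ I_{p,q} x`. -/
def qform (p q : ℕ) (x : Fin (p + q) → ℝ) : ℝ := x ⬝ᵥ (Ipq p q *ᵥ x)

/-- `‖x‖ = √(xᵀ I_{p,q} x)` for timelike `x`. -/
def pqnorm (p q : ℕ) (x : Fin (p + q) → ℝ) : ℝ := Real.sqrt (qform p q x)

/-- `ε(i)`. -/
def epsP (p : ℕ) {n : ℕ} (i : Fin n) : ℝ := if (i : ℕ) < p then 1 else -1

/-- `f_{k,μ} := e^A_{k,μ} · I_{p,q}`. -/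
def fpq (p q : ℕ) (k μ : Fin (p + q)) : Matrix (Fin (p + q)) (Fin (p + q)) ℝ :=
  eA k μ * Ipq p q

/-- `X_μ(x) := Σ_k x_k f_{k,μ}`. -/
def Xpq (p q : ℕ) (x : Fin (p + q) → ℝ) (μ : Fin (p + q)) :
    Matrix (Fin (p + q)) (Fin (p + q)) ℝ :=
  ∑ k, x k • fpq p q k μ


lemma fpq_apply (p q : ℕ) (k μ i j : Fin (p+q)) :
    fpq p q k μ i j = epsP p j * ((if i = k ∧ j = μ then 1 else 0) - (if i = μ ∧ j = k then 1 else 0)) := by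
  simp [fpq, eA, Ipq, Matrix.mul_diagonal, Matrix.single, epsP, eq_comm, and_comm]

lemma qform_eq (p q : ℕ) (x : Fin (p+q) → ℝ) : qform p q x = ∑ i, epsP p i * x i ^ 2 := by
  simp [qform, Ipq, dotProduct, Matrix.mulVec_diagonal, epsP]
  congr 1; ext i; ring

lemma Xpq_apply (p q : ℕ) (x : Fin (p+q) → ℝ) (μ i j : Fin (p+q)) :
    Xpq p q x μ i j = epsP p j * ((if j = μ then x i else 0) - (if i = μ then x j else 0)) := by
  have key : ∀ k : Fin (p+q), (x k • fpq p q k μ) i j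
      = (if k = i then (if j = μ then epsP p j * x i else 0) else 0)
        - (if k = j then (if i = μ then epsP p j * x j else 0) else 0) := by
    intro k
    simp only [Matrix.smul_apply, fpq_apply, smul_eq_mul]
    by_cases h1 : k = i <;> by_cases h2 : k = j <;>
      by_cases h3 : j = μ <;> by_cases h4 : i = μ <;>
      simp_all [eq_comm] <;> ring
  simp only [Xpq, Matrix.sum_apply, key, Finset.sum_sub_distrib, Finset.sum_ite_eq',
    Finset.mem_univ, if_true]
  rw [mul_sub]
  congr 1 <;> split_ifs <;> simp

lemma mulX_apply (p q : ℕ) (x : Fin (p+q) → ℝ) (α β i j : Fin (p+q)) :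
    (Xpq p q x α * Xpq p q x β) i j
      = epsP p α * epsP p j * ((if j = β then x i * x α else 0) - (if α = β then x i * x j else 0))
        - (if i = α ∧ j = β then epsP p j * qform p q x else 0)
        + (if i = α then epsP p β * epsP p j * (x β * x j) else 0) := by
  rw [Matrix.mul_apply]
  have key : ∀ m : Fin (p+q), Xpq p q x α i m * Xpq p q x β m j
      = ((if m = α then epsP p α * epsP p j * ((if j = β then x i * x α else 0) - (if α = β then x i * x j else 0)) else 0)
        - (if i = α ∧ j = β then epsP p j * (epsP p m * x m ^ 2) else 0))
        + (if m = β then (if i = α then epsP p β * epsP p j * (x β * x j) else 0) else 0) := by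
    intro m
    simp only [Xpq_apply]
    by_cases h1 : m = α <;> by_cases h2 : m = β <;> by_cases h3 : j = β <;>
      by_cases h4 : i = α <;> by_cases h5 : α = β <;>
      simp_all [eq_comm] <;> ring
  simp only [key, Finset.sum_add_distrib, Finset.sum_sub_distrib, Finset.sum_ite_eq',
    Finset.mem_univ, if_true, Finset.sum_ite_irrel, Finset.sum_const_zero,
    ← Finset.mul_sum, ← qform_eq]

lemma comm_eq (p q : ℕ) (x : Fin (p+q) → ℝ) (α β : Fin (p+q)) :
    Xpq p q x α * Xpq p q x β - Xpq p q x β * Xpq p q x α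
      = (epsP p α * x α) • Xpq p q x β - (epsP p β * x β) • Xpq p q x α
        - qform p q x • fpq p q α β := by
  ext i j
  simp only [Matrix.sub_apply, Matrix.smul_apply, smul_eq_mul, mulX_apply, Xpq_apply, fpq_apply]
  by_cases h1 : i = α <;> by_cases h2 : i = β <;> by_cases h3 : j = α <;>
    by_cases h4 : j = β <;> by_cases h5 : α = β <;>
    simp_all [eq_comm] <;> ring

variable {p q : ℕ}

/-- derivative of qform -/
lemma hasFDerivAt_qform (x : Fin (p+q) → ℝ) :
    HasFDerivAt (qform p q)
      (∑ i, (2 * epsP p i * x i) • (ContinuousLinearMap.proj i : ((Fin (p+q) → ℝ) →L[ℝ] ℝ))) x := by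
  have : qform p q = fun y => ∑ i, epsP p i * y i ^ 2 := funext fun y => qform_eq p q y
  rw [this]
  apply HasFDerivAt.fun_sum
  intro i _
  have h1 : HasDerivAt (fun t : ℝ => epsP p i * t ^ 2) (2 * epsP p i * x i) (x i) := by
    simpa [mul_comm, mul_assoc, mul_left_comm] using
      ((hasDerivAt_pow 2 (x i)).const_mul (epsP p i))
  have h2 := h1.comp_hasFDerivAt x ((ContinuousLinearMap.proj i : (Fin (p+q) → ℝ) →L[ℝ] ℝ).hasFDerivAt)
  exact h2

lemma hasFDerivAt_Xpq (x : Fin (p+q) → ℝ) (μ : Fin (p+q)) :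
    HasFDerivAt (fun y => Xpq p q y μ)
      (∑ k, (ContinuousLinearMap.proj k : ((Fin (p+q) → ℝ) →L[ℝ] ℝ)).smulRight (fpq p q k μ)) x := by
  have : (fun y => Xpq p q y μ)
      = ⇑(∑ k, (ContinuousLinearMap.proj k : ((Fin (p+q) → ℝ) →L[ℝ] ℝ)).smulRight (fpq p q k μ)) := by
    funext y
    simp [Xpq, ContinuousLinearMap.sum_apply]
  rw [this]
  exact (∑ k, (ContinuousLinearMap.proj k : ((Fin (p+q) → ℝ) →L[ℝ] ℝ)).smulRight (fpq p q k μ)).hasFDerivAt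

lemma Xpq_single (α μ : Fin (p+q)) : Xpq p q (Pi.single α 1) μ = fpq p q α μ := by
  simp [Xpq, Pi.single_apply]

lemma fpq_swap (α β : Fin (p+q)) : fpq p q β α = - fpq p q α β := by
  unfold fpq eA
  rw [show Matrix.single β α (1:ℝ) - Matrix.single α β 1
      = -(Matrix.single α β 1 - Matrix.single β α 1) from (neg_sub _ _).symm]
  rw [neg_mul]

lemma isOpen_pos_qform : IsOpen {y : Fin (p+q) → ℝ | 0 < qform p q y} := by
  have hc : Continuous (qform p q) := by
    have : qform p q = fun y => ∑ i, epsP p i * y i ^ 2 := funext fun y => qform_eq p q y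
    rw [this]
    exact continuous_finset_sum _ fun i _ => continuous_const.mul ((continuous_apply i).pow 2)
  exact isOpen_lt continuous_const hc

lemma fderiv_smul_part (g : ℝ → ℝ) (hg : ContDiffOn ℝ (⊤ : ℕ∞) g (Set.Ioi 0))
    (x : Fin (p+q) → ℝ) (hx : 0 < qform p q x) (μ α : Fin (p+q)) :
    fderiv ℝ (fun y => g (pqnorm p q y) • Xpq p q y μ) x (Pi.single α 1)
      = (deriv g (pqnorm p q x) * (epsP p α * x α) / pqnorm p q x) • Xpq p q x μ
        + g (pqnorm p q x) • fpq p q α μ := by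
  set r := pqnorm p q x with hrdef
  have hr : 0 < r := Real.sqrt_pos.2 hx
  set Dq := (∑ i, (2 * epsP p i * x i) • (ContinuousLinearMap.proj i : ((Fin (p+q) → ℝ) →L[ℝ] ℝ)))
    with hDq
  have hsq : HasFDerivAt (pqnorm p q) ((1/(2*r)) • Dq) x := by
    have := (Real.hasDerivAt_sqrt hx.ne').comp_hasFDerivAt x (hasFDerivAt_qform x)
    exact this
  have hgd : HasDerivAt g (deriv g r) r := by
    have hmem : Set.Ioi (0:ℝ) ∈ nhds r := (isOpen_Ioi).mem_nhds hr
    have : DifferentiableAt ℝ g r :=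
      ((hg.contDiffAt hmem).differentiableAt (by norm_num))
    exact this.hasDerivAt
  have hh : HasFDerivAt (fun y => g (pqnorm p q y)) (deriv g r • ((1/(2*r)) • Dq)) x :=
    hgd.comp_hasFDerivAt x hsq
  have hX := hasFDerivAt_Xpq x μ
  have hprod := hh.smul hX
  rw [show fderiv ℝ (fun y => g (pqnorm p q y) • Xpq p q y μ) x = g (pqnorm p q x) • (∑ k, (ContinuousLinearMap.proj k : ((Fin (p+q) → ℝ) →L[ℝ] ℝ)).smulRight (fpq p q k μ)) + (deriv g r • (1/(2*r)) • Dq).smulRight (Xpq p q x μ) from hprod.fderiv]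
  have hDqv : Dq (Pi.single α 1) = 2 * epsP p α * x α := by
    simp [hDq, ContinuousLinearMap.sum_apply, Pi.single_apply, mul_ite, Finset.sum_ite_eq']
  simp only [ContinuousLinearMap.add_apply, ContinuousLinearMap.smul_apply,
    ContinuousLinearMap.smulRight_apply, ContinuousLinearMap.coe_sum', Finset.sum_apply]
  have h1 : (∑ k : Fin (p+q),
      (ContinuousLinearMap.proj k : (Fin (p+q) → ℝ) →L[ℝ] ℝ) (Pi.single α 1) • fpq p q k μ)
      = fpq p q α μ := by
    simp [Pi.single_apply, ite_smul, Finset.sum_ite_eq']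
  rw [h1, hDqv, ← hrdef]
  match_scalars <;> field_simp [hr.ne'] <;> ring_nf <;> field_simp [hr.ne']

theorem stmt14 (p q : ℕ) (hp : 1 ≤ p) (hq : 1 ≤ q)
    (g : ℝ → ℝ) (hg : ContDiffOn ℝ (⊤ : ℕ∞) g (Set.Ioi 0))
    (B : (Fin (p + q) → ℝ) → Fin (p + q) → Matrix (Fin (p + q)) (Fin (p + q)) ℝ)
    (hB : ∀ x, 0 < qform p q x → ∀ μ, B x μ = g (pqnorm p q x) • Xpq p q x μ) :
    ∀ (α β : Fin (p + q)) (x : Fin (p + q) → ℝ), 0 < qform p q x →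
      fderiv ℝ (fun y => B y β) x (Pi.single α 1)
          - fderiv ℝ (fun y => B y α) x (Pi.single β 1)
          + (B x α * B x β - B x β * B x α)
        = (deriv g (pqnorm p q x) / pqnorm p q x + g (pqnorm p q x) ^ 2) •
            ((epsP p α * x α) • Xpq p q x β - (epsP p β * x β) • Xpq p q x α)
          + (g (pqnorm p q x) * (2 - pqnorm p q x ^ 2 * g (pqnorm p q x))) • fpq p q α β := by
  intro α β x hx
  have hr : 0 < pqnorm p q x := Real.sqrt_pos.2 hx
  have hEV : ∀ μ : Fin (p+q),
      (fun y => B y μ) =ᶠ[nhds x] (fun y => g (pqnorm p q y) • Xpq p q y μ) := by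
    intro μ
    filter_upwards [isOpen_pos_qform.mem_nhds hx] with y hy
    exact hB y hy μ
  have hfd : ∀ μ γ : Fin (p+q), fderiv ℝ (fun y => B y μ) x (Pi.single γ 1)
      = (deriv g (pqnorm p q x) * (epsP p γ * x γ) / pqnorm p q x) • Xpq p q x μ
        + g (pqnorm p q x) • fpq p q γ μ := by
    intro μ γ
    rw [(hEV μ).fderiv_eq, fderiv_smul_part g hg x hx μ γ]
  rw [hfd β α, hfd α β, hB x hx α, hB x hx β]
  have hc : (g (pqnorm p q x) • Xpq p q x α) * (g (pqnorm p q x) • Xpq p q x β)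
      - (g (pqnorm p q x) • Xpq p q x β) * (g (pqnorm p q x) • Xpq p q x α)
      = (g (pqnorm p q x) * g (pqnorm p q x)) •
          (Xpq p q x α * Xpq p q x β - Xpq p q x β * Xpq p q x α) := by
    rw [smul_mul_assoc, smul_mul_assoc, mul_smul_comm, mul_smul_comm,
      smul_smul, smul_smul, smul_sub]
  rw [hc, comm_eq, fpq_swap α β]
  have hq2 : pqnorm p q x ^ 2 = qform p q x := Real.sq_sqrt hx.le
  rw [← hq2]
  match_scalars <;> field_simp <;> ring
end
end

section
/- Let n ≥ 5 and let g : (0,∞) → ℝ be smooth. Define B_μ(x) := g(|x|)·Σ_{k=1}^n x_k e^A_{k,μ} for x ∈ ℝⁿ∖{0}, where |x| is the Euclidean norm. Then B satisfies the Euclidean Yang–Mills equations on ℝⁿ∖{0} if and only if for every r > 0: g''(r) + (n+1)·g'(r)/r + (n−2)·g(r)²·(3 − r² g(r)) = 0. -/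
open Matrix BigOperators

noncomputable section

attribute [local instance] Matrix.normedAddCommGroup Matrix.normedSpace

/-- The curvature `F_{α,β} = ∂B_β/∂x_α − ∂B_α/∂x_β + [B_α, B_β]`. -/
def curv (n : ℕ) (B : (Fin n → ℝ) → Fin n → Matrix (Fin n) (Fin n) ℝ)
    (α β : Fin n) (x : Fin n → ℝ) : Matrix (Fin n) (Fin n) ℝ :=
  fderiv ℝ (fun y => B y β) x (Pi.single α 1)
    - fderiv ℝ (fun y => B y α) x (Pi.single β 1)
    + (B x α * B x β - B x β * B x α)

/-- The Euclidean Yang–Mills equations on `ℝⁿ∖{0}`: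
`Σ_β ([B_β, F_{α,β}] + ∂F_{α,β}/∂x_β) = 0`. -/
def YangMillsEuclid (n : ℕ)
    (B : (Fin n → ℝ) → Fin n → Matrix (Fin n) (Fin n) ℝ) : Prop :=
  ∀ (α : Fin n) (x : Fin n → ℝ), x ≠ 0 →
    ∑ β, ((B x β * curv n B α β x - curv n B α β x * B x β)
      + fderiv ℝ (fun y => curv n B α β y) x (Pi.single β 1)) = 0

namespace YMaux
variable {n : ℕ}

def mm (μ : Fin n) (x : Fin n → ℝ) : Matrix (Fin n) (Fin n) ℝ := ∑ k, x k • eA k μ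

lemma eA_apply (i j a b : Fin n) :
    eA i j a b = (if i = a ∧ j = b then (1:ℝ) else 0) - (if j = a ∧ i = b then 1 else 0) := by
  simp [eA, Matrix.single, Matrix.sub_apply]

lemma mm_apply (μ : Fin n) (x : Fin n → ℝ) (a b : Fin n) :
    mm μ x a b = x a * (if μ = b then (1:ℝ) else 0) - x b * (if μ = a then 1 else 0) := by
  simp only [mm, Matrix.sum_apply, Matrix.smul_apply, eA_apply, smul_eq_mul, mul_sub]
  rw [Finset.sum_sub_distrib]
  congr 1
  · rcases eq_or_ne μ b with rfl | h
    · simp [Finset.sum_ite_eq]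
    · simp [h]
  · rcases eq_or_ne μ a with rfl | h
    · simp [Finset.sum_ite_eq]
    · simp [h]

variable {n : ℕ}

lemma eA_apply' (i j a b : Fin n) :
    eA i j a b = (if i = a then (1:ℝ) else 0) * (if j = b then 1 else 0)
      - (if j = a then (1:ℝ) else 0) * (if i = b then 1 else 0) := by
  rw [eA_apply]; congr 1 <;> split_ifs <;> simp_all

set_option maxHeartbeats 2000000 in
lemma comm_mm (α β : Fin n) (x : Fin n → ℝ) :
    mm α x * mm β x - mm β x * mm α x
      = x α • mm β x - x β • mm α x - (∑ k, x k ^ 2) • eA α β := by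
  ext a b
  simp only [Matrix.mul_apply, Matrix.sub_apply, Matrix.smul_apply, smul_eq_mul,
    mm_apply, eA_apply', sub_mul, mul_sub, Finset.sum_sub_distrib]
  simp only [mul_ite, ite_mul, mul_one, mul_zero, one_mul, zero_mul,
    Finset.sum_ite_eq, Finset.sum_ite_eq', Finset.mem_univ, if_true]
  by_cases hbb : β = b <;> by_cases haa : α = a <;> by_cases hab : α = b <;>
    by_cases hba : β = a <;> subst_vars <;>
    simp_all [pow_two, Finset.mul_sum, Finset.sum_ite_eq, eq_comm] <;> ring

lemma eA_swap (α β : Fin n) : eA β α = - eA α β := by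
  ext a b; simp [eA_apply]

lemma mm_single (μ α : Fin n) : mm μ (Pi.single α 1) = eA α μ := by
  ext a b
  simp only [mm_apply, eA_apply', Pi.single_apply]
  split_ifs <;> subst_vars <;> simp_all [eq_comm]

lemma sum_smul_mm (x : Fin n → ℝ) : ∑ β, x β • mm β x = 0 := by
  ext a b
  simp only [Matrix.sum_apply, Matrix.smul_apply, smul_eq_mul, mm_apply, mul_sub,
    Finset.sum_sub_distrib, Matrix.zero_apply]
  simp [mul_ite, Finset.sum_ite_eq, mul_comm]

lemma sum_smul_eA (α : Fin n) (x : Fin n → ℝ) : ∑ β, x β • eA α β = -(mm α x) := by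
  ext a b
  simp only [Matrix.sum_apply, Matrix.smul_apply, smul_eq_mul, eA_apply', mm_apply,
    Matrix.neg_apply, mul_sub, Finset.sum_sub_distrib]
  simp [mul_ite, ite_mul, Finset.sum_ite_eq, Finset.sum_ite_eq', eq_comm]

lemma sum_smul_eA' (α : Fin n) (x : Fin n → ℝ) : ∑ β, x β • eA β α = mm α x := by
  have : ∀ β, x β • eA β α = -(x β • eA α β) := by intro β; rw [eA_swap]; simp
  simp only [this, Finset.sum_neg_distrib, sum_smul_eA, neg_neg]

set_option maxHeartbeats 2000000 in
lemma sum_comm_eA (α : Fin n) (x : Fin n → ℝ) :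
    ∑ β, (mm β x * eA α β - eA α β * mm β x) = -(((n:ℝ) - 2) • mm α x) := by
  ext a b
  simp only [Matrix.sum_apply, Matrix.sub_apply, Matrix.mul_apply, Matrix.neg_apply,
    Matrix.smul_apply, smul_eq_mul, mm_apply, eA_apply', sub_mul, mul_sub,
    Finset.sum_sub_distrib]
  simp only [mul_ite, ite_mul, mul_one, mul_zero, one_mul, zero_mul,
    Finset.sum_ite_eq, Finset.sum_ite_eq', Finset.mem_univ, if_true]
  by_cases hbb : α = b <;> by_cases haa : α = a <;> by_cases hab : a = b <;> subst_vars <;>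
    simp_all [eq_comm, Finset.sum_ite_eq, Finset.sum_sub_distrib, Finset.mul_sum,
      Finset.sum_ite_eq', mul_comm] <;> ring

lemma eA_diag (β : Fin n) : eA β β = 0 := by
  ext a b; simp [eA_apply]

lemma sum_xK (α : Fin n) (x : Fin n → ℝ) (c : ℝ) :
    ∑ β, (c * x β) • (x α • mm β x - x β • mm α x)
      = -(c * ∑ k, x k ^ 2) • mm α x := by
  have h1 : ∀ β, (c * x β) • (x α • mm β x - x β • mm α x)
      = (c * x α) • (x β • mm β x) - (c * x β ^ 2) • mm α x := by
    intro β; rw [smul_sub, smul_smul, smul_smul, smul_smul]; ring_nf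
  simp only [h1, Finset.sum_sub_distrib, ← Finset.smul_sum, sum_smul_mm, smul_zero,
    ← Finset.sum_smul, ← Finset.mul_sum, zero_sub, neg_smul]

lemma sum_mid (α : Fin n) (x : Fin n → ℝ) :
    ∑ β, ((if α = β then (1:ℝ) else 0) • mm β x - mm α x + x β • eA α β)
      = -((n:ℝ) • mm α x) := by
  simp only [Finset.sum_add_distrib, Finset.sum_sub_distrib, ite_smul, one_smul, zero_smul,
    Finset.sum_ite_eq, Finset.mem_univ, if_true, Finset.sum_const, Finset.card_univ,
    Fintype.card_fin, sum_smul_eA]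
  rw [← Nat.cast_smul_eq_nsmul ℝ]
  module

lemma sum_xeA (α : Fin n) (x : Fin n → ℝ) (c : ℝ) :
    ∑ β, (c * x β) • eA α β = -(c • mm α x) := by
  have h1 : ∀ β, (c * x β) • eA α β = c • (x β • eA α β) := by
    intro β; rw [smul_smul]
  simp only [h1, ← Finset.smul_sum, sum_smul_eA, smul_neg]

lemma sum_comm_K (α : Fin n) (x : Fin n → ℝ) :
    ∑ β, (mm β x * (x α • mm β x - x β • mm α x)
        - (x α • mm β x - x β • mm α x) * mm β x) = 0 := by
  have h1 : ∀ β, mm β x * (x α • mm β x - x β • mm α x)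
      - (x α • mm β x - x β • mm α x) * mm β x
      = x β • (mm α x * mm β x - mm β x * mm α x) := by
    intro β
    simp only [mul_sub, sub_mul, smul_sub, mul_smul_comm, smul_mul_assoc]
    abel
  have h2 : ∀ β, x β • (mm α x * mm β x - mm β x * mm α x)
      = x α • (x β • mm β x) - (x β ^ 2) • mm α x
        - (∑ k, x k ^ 2) • (x β • eA α β) := by
    intro β
    rw [comm_mm]
    module
  simp only [h1, h2, Finset.sum_sub_distrib, ← Finset.smul_sum, sum_smul_mm, smul_zero,
    ← Finset.sum_smul, sum_smul_eA, smul_neg]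
  abel

def pr (i : Fin n) : (Fin n → ℝ) →L[ℝ] ℝ := ContinuousLinearMap.proj i

lemma pr_apply (i : Fin n) (v : Fin n → ℝ) : pr i v = v i := rfl

def ip (x : Fin n → ℝ) : (Fin n → ℝ) →L[ℝ] ℝ :=
  ∑ i, x i • pr i

lemma ip_apply (x v : Fin n → ℝ) : ip x v = ∑ i, x i * v i := by
  simp [ip, pr]

lemma ip_single (x : Fin n → ℝ) (α : Fin n) : ip x (Pi.single α 1) = x α := by
  simp [ip_apply, Pi.single_apply, mul_ite, Finset.sum_ite_eq', Finset.sum_ite_eq]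

def mmL (β : Fin n) : (Fin n → ℝ) →L[ℝ] Matrix (Fin n) (Fin n) ℝ :=
  ∑ k, (pr k).smulRight (eA k β)

lemma mmL_apply (β : Fin n) (v : Fin n → ℝ) : mmL β v = mm β v := by
  simp [mmL, mm, pr_apply]

lemma hasFDerivAt_mm (β : Fin n) (x : Fin n → ℝ) :
    HasFDerivAt (fun y => mm β y) (mmL β) x := by
  have h : (fun y : Fin n → ℝ => mm β y) = fun y => mmL β y := by
    funext y; rw [mmL_apply]
  rw [h]
  exact (mmL β).hasFDerivAt

lemma sumsq_pos {x : Fin n → ℝ} (hx : x ≠ 0) : 0 < ∑ i, x i ^ 2 := by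
  obtain ⟨i, hi⟩ := Function.ne_iff.mp hx
  have : (0:ℝ) < x i ^ 2 := pow_two_pos_of_ne_zero hi
  exact Finset.sum_pos' (fun j _ => sq_nonneg _) ⟨i, Finset.mem_univ i, this⟩

lemma nrm_pos {x : Fin n → ℝ} (hx : x ≠ 0) : 0 < nrm x :=
  Real.sqrt_pos.mpr (sumsq_pos hx)

lemma nrm_sq {x : Fin n → ℝ} (hx : x ≠ 0) : nrm x ^ 2 = ∑ i, x i ^ 2 :=
  Real.sq_sqrt (sumsq_pos hx).le

set_option maxHeartbeats 1000000 in
lemma hasFDerivAt_nrm {x : Fin n → ℝ} (hx : x ≠ 0) :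
    HasFDerivAt nrm ((nrm x)⁻¹ • ip x) x := by
  have hs : 0 < ∑ i, x i ^ 2 := sumsq_pos hx
  have hsq : HasFDerivAt (fun y : Fin n → ℝ => ∑ i, y i ^ 2) ((2:ℝ) • ip x) x := by
    have h1 : ∀ i : Fin n, HasFDerivAt (fun y : Fin n → ℝ => y i * y i)
        (x i • pr i + x i • pr i) x :=
      fun i => (hasFDerivAt_apply i x).mul (hasFDerivAt_apply i x)
    have h2 := HasFDerivAt.sum (fun i (_ : i ∈ Finset.univ) => h1 i)
    have e1 : (fun y : Fin n → ℝ => ∑ i, y i ^ 2) = fun y => ∑ i, y i * y i := by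
      funext y; simp [pow_two]
    have e2 : ∑ i, (x i • pr i + x i • pr i
        : (Fin n → ℝ) →L[ℝ] ℝ) = (2:ℝ) • ip x := by
      ext v
      simp [ip, pr, Finset.sum_add_distrib]
      ring
    rw [e1, ← e2]
    rw [show (fun y : Fin n → ℝ => ∑ i, y i * y i) = ∑ i, (fun y : Fin n → ℝ => y i * y i) from by
      funext y; simp [Finset.sum_apply]]
    exact h2
  have hsqrt := (Real.hasDerivAt_sqrt hs.ne').comp_hasFDerivAt x hsq
  have : (1 / (2 * Real.sqrt (∑ i, x i ^ 2))) • ((2:ℝ) • ip x) = (nrm x)⁻¹ • ip x := by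
    rw [smul_smul, nrm]
    congr 1
    have : Real.sqrt (∑ i, x i ^ 2) ≠ 0 := (Real.sqrt_pos.mpr hs).ne'
    field_simp
  rw [← this]
  exact hsqrt

lemma hasFDerivAt_comp_nrm {x : Fin n → ℝ} (hx : x ≠ 0) {c : ℝ → ℝ} {c' : ℝ}
    (hc : HasDerivAt c c' (nrm x)) :
    HasFDerivAt (fun y => c (nrm y)) ((c' / nrm x) • ip x) x := by
  have h := hc.comp_hasFDerivAt x (hasFDerivAt_nrm hx)
  have e : c' • ((nrm x)⁻¹ • ip x) = (c' / nrm x) • ip x := by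
    rw [smul_smul, div_eq_mul_inv]
  rw [← e]
  exact h

def Pf (g : ℝ → ℝ) (t : ℝ) : ℝ := deriv g t / t + g t ^ 2

def Qf (g : ℝ → ℝ) (t : ℝ) : ℝ := 2 * g t - t ^ 2 * g t ^ 2

lemma curv_formula {g : ℝ → ℝ} {B : (Fin n → ℝ) → Fin n → Matrix (Fin n) (Fin n) ℝ}
    (hB : ∀ x : Fin n → ℝ, x ≠ 0 → ∀ μ, B x μ = g (nrm x) • mm μ x)
    (hgd : ∀ r : ℝ, 0 < r → HasDerivAt g (deriv g r) r)
    {x : Fin n → ℝ} (hx : x ≠ 0) (α β : Fin n) :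
    curv n B α β x = Pf g (nrm x) • (x α • mm β x - x β • mm α x)
      + Qf g (nrm x) • eA α β := by
  have hr : 0 < nrm x := nrm_pos hx
  have hBf : ∀ μ, HasFDerivAt (fun y => g (nrm y) • mm μ y)
      (g (nrm x) • mmL μ + ((deriv g (nrm x) / nrm x) • ip x).smulRight (mm μ x)) x :=
    fun μ => (hasFDerivAt_comp_nrm hx (hgd _ hr)).smul (hasFDerivAt_mm μ x)
  have hfd : ∀ μ, fderiv ℝ (fun y => B y μ) x
      = g (nrm x) • mmL μ + ((deriv g (nrm x) / nrm x) • ip x).smulRight (mm μ x) := by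
    intro μ
    have hev : (fun y => B y μ) =ᶠ[nhds x] (fun y => g (nrm y) • mm μ y) := by
      filter_upwards [IsOpen.mem_nhds isOpen_ne hx] with y hy using hB y hy μ
    rw [hev.fderiv_eq]
    exact (hBf μ).fderiv
  have heval : ∀ μ ν, (g (nrm x) • mmL μ
        + ((deriv g (nrm x) / nrm x) • ip x).smulRight (mm μ x)) (Pi.single ν 1)
      = g (nrm x) • eA ν μ + (deriv g (nrm x) / nrm x * x ν) • mm μ x := by
    intro μ ν
    simp only [ContinuousLinearMap.add_apply, ContinuousLinearMap.smul_apply,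
      ContinuousLinearMap.smulRight_apply, ContinuousLinearMap.coe_smul', Pi.smul_apply,
      mmL_apply, mm_single, ip_single, smul_eq_mul]
  have hcm : B x α * B x β - B x β * B x α
      = (g (nrm x) * g (nrm x)) • (x α • mm β x - x β • mm α x
          - (nrm x ^ 2) • eA α β) := by
    rw [hB x hx α, hB x hx β, smul_mul_smul_comm, smul_mul_smul_comm, ← smul_sub, comm_mm,
      nrm_sq hx]
  rw [curv, hfd α, hfd β, heval, heval, hcm, eA_swap β α, nrm_sq hx]
  simp only [Pf, Qf, ← nrm_sq hx]
  module

lemma fderiv_curv_eval {g : ℝ → ℝ} {B : (Fin n → ℝ) → Fin n → Matrix (Fin n) (Fin n) ℝ}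
    (hB : ∀ x : Fin n → ℝ, x ≠ 0 → ∀ μ, B x μ = g (nrm x) • mm μ x)
    (hgd : ∀ r : ℝ, 0 < r → HasDerivAt g (deriv g r) r)
    {x : Fin n → ℝ} (hx : x ≠ 0) (α β : Fin n) {pP pQ : ℝ}
    (hP : HasDerivAt (Pf g) pP (nrm x)) (hQ : HasDerivAt (Qf g) pQ (nrm x)) :
    fderiv ℝ (fun y => curv n B α β y) x (Pi.single β 1)
      = (pP / nrm x * x β) • (x α • mm β x - x β • mm α x)
        + Pf g (nrm x) • ((if α = β then (1:ℝ) else 0) • mm β x - mm α x + x β • eA α β)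
        + (pQ / nrm x * x β) • eA α β := by
  have hK : HasFDerivAt (fun y : Fin n → ℝ => y α • mm β y - y β • mm α y)
      ((x α • mmL β + (pr α).smulRight (mm β x))
        - (x β • mmL α + (pr β).smulRight (mm α x))) x :=
    ((hasFDerivAt_apply α x).smul (hasFDerivAt_mm β x)).sub
      ((hasFDerivAt_apply β x).smul (hasFDerivAt_mm α x))
  have h1 := (hasFDerivAt_comp_nrm hx hP).smul hK
  have h2 := (hasFDerivAt_comp_nrm hx hQ).smul_const (eA α β)
  have htot := h1.add h2
  have hev : (fun y => curv n B α β y) =ᶠ[nhds x]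
      (fun y => Pf g (nrm y) • (y α • mm β y - y β • mm α y) + Qf g (nrm y) • eA α β) := by
    filter_upwards [IsOpen.mem_nhds isOpen_ne hx] with y hy using
      curv_formula hB hgd hy α β
  have htot' : HasFDerivAt (fun y => Pf g (nrm y) • (y α • mm β y - y β • mm α y)
    + Qf g (nrm y) • eA α β)
      (Pf g (nrm x) • (x α • mmL β + (pr α).smulRight (mm β x) - (x β • mmL α + (pr β).smulRight (mm α x)))
        + ((pP / nrm x) • ip x).smulRight (x α • mm β x - x β • mm α x)
        + ((pQ / nrm x) • ip x).smulRight (eA α β)) x := htot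
  rw [hev.fderiv_eq, htot'.fderiv]
  simp only [ContinuousLinearMap.add_apply, ContinuousLinearMap.smul_apply,
    ContinuousLinearMap.smulRight_apply, ContinuousLinearMap.coe_smul', Pi.smul_apply,
    ContinuousLinearMap.coe_sub', Pi.sub_apply, mmL_apply, mm_single, ip_single,
    smul_eq_mul, pr_apply]
  have hsβ : (Pi.single β 1 : Fin n → ℝ) β = 1 := by simp
  have hsα : (Pi.single β 1 : Fin n → ℝ) α = if α = β then (1:ℝ) else 0 := by
    simp [Pi.single_apply]
  rw [hsα, hsβ, eA_diag, eA_swap β α]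
  module

lemma sum_eval {g : ℝ → ℝ} {B : (Fin n → ℝ) → Fin n → Matrix (Fin n) (Fin n) ℝ}
    (hB : ∀ x : Fin n → ℝ, x ≠ 0 → ∀ μ, B x μ = g (nrm x) • mm μ x)
    (hgd : ∀ r : ℝ, 0 < r → HasDerivAt g (deriv g r) r)
    {x : Fin n → ℝ} (hx : x ≠ 0) (α : Fin n) {pP pQ : ℝ}
    (hP : HasDerivAt (Pf g) pP (nrm x)) (hQ : HasDerivAt (Qf g) pQ (nrm x)) :
    ∑ β, ((B x β * curv n B α β x - curv n B α β x * B x β)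
        + fderiv ℝ (fun y => curv n B α β y) x (Pi.single β 1))
      = -((nrm x * pP + (n:ℝ) * Pf g (nrm x) + pQ / nrm x
          + ((n:ℝ) - 2) * g (nrm x) * Qf g (nrm x)) • mm α x) := by
  have hr0 : nrm x ≠ 0 := (nrm_pos hx).ne'
  have hC : ∀ β, B x β * curv n B α β x - curv n B α β x * B x β
      = (g (nrm x) * Pf g (nrm x)) • (mm β x * (x α • mm β x - x β • mm α x)
            - (x α • mm β x - x β • mm α x) * mm β x)
        + (g (nrm x) * Qf g (nrm x)) • (mm β x * eA α β - eA α β * mm β x) := by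
    intro β
    rw [hB x hx β, curv_formula hB hgd hx α β]
    simp only [mul_add, add_mul, mul_sub, sub_mul, smul_mul_assoc, mul_smul_comm,
      smul_sub, smul_add, smul_smul]
    module
  have hD : ∀ β, fderiv ℝ (fun y => curv n B α β y) x (Pi.single β 1)
      = (pP / nrm x * x β) • (x α • mm β x - x β • mm α x)
        + Pf g (nrm x) • ((if α = β then (1:ℝ) else 0) • mm β x - mm α x + x β • eA α β)
        + (pQ / nrm x * x β) • eA α β :=
    fun β => fderiv_curv_eval hB hgd hx α β hP hQ
  simp only [hC, hD]
  rw [Finset.sum_add_distrib, Finset.sum_add_distrib, Finset.sum_add_distrib,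
    Finset.sum_add_distrib, ← Finset.smul_sum, ← Finset.smul_sum, ← Finset.smul_sum,
    sum_comm_K, sum_comm_eA, sum_xK, sum_mid, sum_xeA, ← nrm_sq hx]
  match_scalars
  field_simp
  ring

end YMaux

open YMaux in
theorem stmt15 (n : ℕ) (hn : 5 ≤ n)
    (g : ℝ → ℝ) (hg : ContDiffOn ℝ (⊤ : ℕ∞) g (Set.Ioi 0))
    (B : (Fin n → ℝ) → Fin n → Matrix (Fin n) (Fin n) ℝ)
    (hB : ∀ x : Fin n → ℝ, x ≠ 0 → ∀ μ, B x μ = g (nrm x) • ∑ k, x k • eA k μ) :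
    YangMillsEuclid n B ↔
      ∀ r : ℝ, 0 < r →
        deriv (deriv g) r + ((n : ℝ) + 1) * deriv g r / r
          + ((n : ℝ) - 2) * g r ^ 2 * (3 - r ^ 2 * g r) = 0 := by
  have hBm : ∀ x : Fin n → ℝ, x ≠ 0 → ∀ μ, B x μ = g (nrm x) • mm μ x := hB
  have hg1 : ContDiffOn ℝ (⊤ : ℕ∞) g (Set.Ioi 0) := hg.of_le (by simp)
  obtain ⟨hgdiff, hg2⟩ := (contDiffOn_infty_iff_deriv_of_isOpen isOpen_Ioi).mp hg1
  obtain ⟨hdgdiff, -⟩ := (contDiffOn_infty_iff_deriv_of_isOpen isOpen_Ioi).mp hg2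
  have hgd : ∀ r : ℝ, 0 < r → HasDerivAt g (deriv g r) r := fun r hr =>
    (hgdiff.differentiableAt (Ioi_mem_nhds hr)).hasDerivAt
  have hdgd : ∀ r : ℝ, 0 < r → HasDerivAt (deriv g) (deriv (deriv g) r) r := fun r hr =>
    (hdgdiff.differentiableAt (Ioi_mem_nhds hr)).hasDerivAt
  set pP : ℝ → ℝ := fun r =>
    (deriv (deriv g) r * r - deriv g r * 1) / r ^ 2 + 2 * g r ^ 1 * deriv g r with hpP
  set pQ : ℝ → ℝ := fun r =>
    2 * deriv g r - ((2:ℝ) * r ^ 1 * g r ^ 2 + r ^ 2 * (2 * g r ^ 1 * deriv g r)) with hpQ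
  have hP : ∀ r : ℝ, 0 < r → HasDerivAt (Pf g) (pP r) r := fun r hr =>
    ((hdgd r hr).div (hasDerivAt_id r) hr.ne').add ((hgd r hr).pow 2)
  have hQ : ∀ r : ℝ, 0 < r → HasDerivAt (Qf g) (pQ r) r := fun r hr =>
    ((hgd r hr).const_mul 2).sub ((hasDerivAt_pow 2 r).mul ((hgd r hr).pow 2))
  set E : ℝ → ℝ := fun r => r * pP r + (n : ℝ) * Pf g r + pQ r / r
    + ((n : ℝ) - 2) * g r * Qf g r with hE
  have hEid : ∀ r : ℝ, 0 < r → E r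
      = deriv (deriv g) r + ((n : ℝ) + 1) * deriv g r / r
        + ((n : ℝ) - 2) * g r ^ 2 * (3 - r ^ 2 * g r) := by
    intro r hr
    have hr0 : r ≠ 0 := hr.ne'
    simp only [hE, hpP, hpQ, Pf, Qf]
    field_simp
    ring
  have hsum : ∀ (α : Fin n) (x : Fin n → ℝ), x ≠ 0 →
      ∑ β, ((B x β * curv n B α β x - curv n B α β x * B x β)
          + fderiv ℝ (fun y => curv n B α β y) x (Pi.single β 1))
        = -(E (nrm x) • mm α x) := fun α x hx =>
    sum_eval hBm hgd hx α (hP _ (nrm_pos hx)) (hQ _ (nrm_pos hx))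
  constructor
  · intro hYM r hr
    set i0 : Fin n := ⟨0, by omega⟩ with hi0
    set i1 : Fin n := ⟨1, by omega⟩ with hi1
    set x : Fin n → ℝ := Pi.single i0 r with hxdef
    have hx : x ≠ 0 := by
      intro h
      have := congrFun h i0
      simp [hxdef] at this
      exact hr.ne' this
    have hnrmx : nrm x = r := by
      have : ∑ i, x i ^ 2 = r ^ 2 := by
        simp only [hxdef, Pi.single_apply]
        rw [Finset.sum_congr rfl (fun i _ => apply_ite (· ^ 2) (i = i0) r 0)]
        simp
      rw [nrm, this, Real.sqrt_sq hr.le]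
    have h := hYM i1 x hx
    rw [hsum i1 x hx, hnrmx] at h
    have hentry := congrFun (congrFun h i0) i1
    have hne : i1 ≠ i0 := by simp [hi0, hi1, Fin.ext_iff]
    have hx0 : x i0 = r := by simp [hxdef]
    have hx1 : x i1 = 0 := by simp [hxdef, Pi.single_apply, hne]
    simp only [Matrix.neg_apply, Matrix.smul_apply, mm_apply, Matrix.zero_apply,
      smul_eq_mul, hx0, hx1, if_pos rfl, if_neg hne, if_true, mul_one, mul_zero,
      zero_mul, sub_zero, neg_eq_zero] at hentry
    have hE0 : E r = 0 := by
      have : E r * r = 0 := hentry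
      rcases mul_eq_zero.mp this with h' | h'
      · exact h'
      · exact absurd h' hr.ne'
    rw [← hEid r hr]
    exact hE0
  · intro hODE α x hx
    have hE0 : E (nrm x) = 0 := by
      rw [hEid (nrm x) (nrm_pos hx)]; exact hODE (nrm x) (nrm_pos hx)
    rw [hsum α x hx, hE0, zero_smul, neg_zero]
end
end
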